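/- arXiv:2509.22084 — 2 statements merged into one kernel-verified Lean document; each statement's English description precedes it below -/
import Mathlib

section
/- Let c = (c_n)_{n≥1} be a sequence with 0 < c_n < 1/2 for all n, let E_c be the associated symmetric Cantor set, and let φ_0, φ_1 : [0,1] → [0,1] be the maps defined via the Cantor construction of E_c (φ_i maps each gap G_ω affinely onto G_{iω}, and sends π(ω) to π(iω) for infinite words ω, where π is the coding map). Then φ_0 and φ_1 are bi-Lipschitz contractions on [0,1] if and only if 0 < inf_{n≥1} c_n(1−2c_{n+1})/(1−2c_n) and sup_{n≥1} c_n(1−2c_{n+1})/(1−2c_n) < 1. -/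
open Filter Set Metric MeasureTheory Topology
open scoped ENNReal

/-- Minimal number of closed intervals of diameter at most `δ` (i.e. closed balls of
radius `δ/2`) needed to cover `E`. -/
noncomputable def coverNum (E : Set ℝ) (δ : ℝ) : ℕ :=
  sInf {n : ℕ | ∃ c : Fin n → ℝ, E ⊆ ⋃ i, Metric.closedBall (c i) (δ / 2)}

/-- Lower box dimension of a set `E ⊆ ℝ`. -/
noncomputable def lowerBoxDim (E : Set ℝ) : ℝ :=
  Filter.liminf (fun δ : ℝ => Real.log (coverNum E δ) / (-Real.log δ)) (𝓝[>] 0)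

/-- Upper box dimension of a set `E ⊆ ℝ`. -/
noncomputable def upperBoxDim (E : Set ℝ) : ℝ :=
  Filter.limsup (fun δ : ℝ => Real.log (coverNum E δ) / (-Real.log δ)) (𝓝[>] 0)

/-- Assouad dimension of a set `E ⊆ ℝ`. -/
noncomputable def assouadDim (E : Set ℝ) : ℝ :=
  Filter.limsup (fun r : ℝ =>
      ⨆ R : Set.Ioi (0:ℝ), ⨆ x : E,
        Real.log (coverNum (E ∩ Set.Icc ((x:ℝ) - (R:ℝ)) ((x:ℝ) + (R:ℝ))) ((R:ℝ) * r)) /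
          Real.log (1 / r))
    (𝓝[>] 0)

/-- Lower dimension of a set `E ⊆ ℝ`. -/
noncomputable def lowerDim (E : Set ℝ) : ℝ :=
  Filter.liminf (fun r : ℝ =>
      ⨅ R : Set.Ioo (0:ℝ) 1, ⨅ x : E,
        Real.log (coverNum (E ∩ Set.Icc ((x:ℝ) - (R:ℝ)) ((x:ℝ) + (R:ℝ))) ((R:ℝ) * r)) /
          Real.log (1 / r))
    (𝓝[>] 0)

/-- Lower local dimension of a measure `μ` at `x`. -/
noncomputable def lowerLocalDim (μ : Measure ℝ) (x : ℝ) : ℝ :=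
  Filter.liminf (fun δ : ℝ => Real.log ((μ (Metric.closedBall x δ)).toReal) / Real.log δ) (𝓝[>] 0)

/-- Upper local dimension of a measure `μ` at `x`. -/
noncomputable def upperLocalDim (μ : Measure ℝ) (x : ℝ) : ℝ :=
  Filter.limsup (fun δ : ℝ => Real.log ((μ (Metric.closedBall x δ)).toReal) / Real.log δ) (𝓝[>] 0)

/-- Binary entropy function (note that `Real.log 0 = 0` in Mathlib, which implements the
convention `0 log 0 = 0`). -/
noncomputable def Hent (p : ℝ) : ℝ := -(p * Real.log p) - (1 - p) * Real.log (1 - p)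

/-- `D(λ) = max_{(p,q) ∈ [0,1]²} (βH(p) + (1-β)H(q)) / (λ + β(1-β)(q-p) log 2)`. -/
noncomputable def Dfun (β lam : ℝ) : ℝ :=
  sSup ((fun pq : ℝ × ℝ =>
    (β * Hent pq.1 + (1 - β) * Hent pq.2) /
      (lam + β * (1 - β) * (pq.2 - pq.1) * Real.log 2)) '' (Set.Icc 0 1 ×ˢ Set.Icc 0 1))

/-- `a_0 = 1`, `a_1 = 2`. -/
noncomputable def aBit (b : Bool) : ℝ := if b then 2 else 1

/-- The length function `ℓ(ω₁…ωₙ) = (a_{ω₁}⋯a_{ω_{⌊βn⌋}}) / (a_{ω₁}⋯a_{ω_n})^β · M^{-n}`.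
A finite word `ω₁…ωₙ` is encoded as the list `[ω₁, …, ωₙ]`. -/
noncomputable def ellBM (β M : ℝ) (w : List Bool) : ℝ :=
  ((w.take ⌊β * (w.length : ℝ)⌋₊).map aBit).prod / ((w.map aBit).prod) ^ β *
    M ^ (-(w.length : ℝ))

/-- The length function `ℓ*(ω₁…ωₙ) = (a_{ω₁}⋯a_{ω_{⌊βn⌋}}) / (a_{ω₁}⋯a_{ω_n})^β ·
(∏_{i=1}^n M_i)⁻¹`. -/
noncomputable def ellStar (β : ℝ) (Mseq : ℕ → ℝ) (w : List Bool) : ℝ :=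
  ((w.take ⌊β * (w.length : ℝ)⌋₊).map aBit).prod / ((w.map aBit).prod) ^ β *
    (∏ i ∈ Finset.range w.length, Mseq (i + 1))⁻¹

/-- The left endpoint of the generating interval `I_w` of the Cantor set determined by the
length function `ℓ` (in the standard construction, the left child shares the left endpoint of
its parent and the right child shares the right endpoint, so the endpoints are determined by
`ℓ`): passing from a prefix `p` to `p·1` moves the left endpoint by `ℓ(p) - ℓ(p·1)`. -/
noncomputable def leftEnd (ℓ : List Bool → ℝ) (w : List Bool) : ℝ :=
  ∑ k ∈ Finset.range w.length,
    if w.getD k false = true then ℓ (w.take k) - ℓ (w.take (k + 1)) else 0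

/-- Right endpoint of the generating interval `I_w`. -/
noncomputable def rightEnd (ℓ : List Bool → ℝ) (w : List Bool) : ℝ := leftEnd ℓ w + ℓ w

/-- The Cantor set determined by the length function `ℓ`:
`E = ⋂_n ⋃_{|w| = n} I_w` with `I_w = [leftEnd ℓ w, rightEnd ℓ w]`. -/
noncomputable def cantorOf (ℓ : List Bool → ℝ) : Set ℝ :=
  ⋂ n : ℕ, ⋃ (w : List Bool) (_ : w.length = n), Set.Icc (leftEnd ℓ w) (rightEnd ℓ w)

/-- The coding map `π : Ω^ℕ → E` associated with left-endpoint function `l`: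
`π(ω) = sup_n l(ω₁…ωₙ)` (the prefixes' left endpoints increase to `π(ω)`). -/
noncomputable def codeMapL (l : List Bool → ℝ) (ω : ℕ → Bool) : ℝ :=
  ⨆ n : ℕ, l (List.ofFn fun k : Fin n => ω k)

/-- Prepend the symbol `i` to an infinite word: `iω`. -/
def consSeq (i : Bool) (ω : ℕ → Bool) : ℕ → Bool := fun n => if n = 0 then i else ω (n - 1)

/-- The set of ratios `{ |I_{iω}|/|I_ω| : ω ∈ Ω* } ∪ { |G_{iω}|/|G_ω| : ω ∈ Ω* }` for a Cantor
construction with generating intervals `I_w = [l w, r w]` and gaps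
`G_w = (r (w0), l (w1))`. -/
def ratioSet (l r : List Bool → ℝ) (i : Bool) : Set ℝ :=
  (Set.range fun w : List Bool => (r (i :: w) - l (i :: w)) / (r w - l w)) ∪
  (Set.range fun w : List Bool =>
    (l ((i :: w) ++ [true]) - r ((i :: w) ++ [false])) /
      (l (w ++ [true]) - r (w ++ [false])))

/-- `u_n` in the additive representation of the symmetric Cantor set (`0`-indexed, so `c 0`
is the first ratio `c₁`). -/
noncomputable def uSym (c : ℕ → ℝ) (n : ℕ) : ℝ := (∏ j ∈ Finset.range n, c j) * (1 - c n)

/-- The coding map of the symmetric Cantor set: `π(ω) = Σ_n ω_n u_n`. -/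
noncomputable def piSym (c : ℕ → ℝ) (ω : ℕ → Bool) : ℝ := ∑' n, if ω n then uSym c n else 0

/-- The symmetric Cantor set `E_c = { Σ_n ω_n u_n : ω ∈ {0,1}^ℕ }`. -/
noncomputable def symCantor (c : ℕ → ℝ) : Set ℝ := Set.range (piSym c)

/-- Left endpoint of the generating interval `I_w` of the symmetric Cantor set. -/
noncomputable def lSym (c : ℕ → ℝ) (w : List Bool) : ℝ :=
  ∑ k ∈ Finset.range w.length, if w.getD k false = true then uSym c k else 0

/-- Right endpoint of the generating interval `I_w` of the symmetric Cantor set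
(`|I_w| = c₁⋯c_n` for `|w| = n`). -/
noncomputable def rSym (c : ℕ → ℝ) (w : List Bool) : ℝ :=
  lSym c w + ∏ j ∈ Finset.range w.length, c j

/-- Support of a Borel measure on `ℝ`: points all of whose neighbourhoods have positive
measure. -/
def measSupport (μ : Measure ℝ) : Set ℝ := {x | ∀ U ∈ 𝓝 x, 0 < μ U}

/-- `ν`-measure of the cylinder set `[b₁…bₙ]`, as a real number. -/
noncomputable def cylP (ν : Measure (ℕ → Bool)) {n : ℕ} (b : Fin n → Bool) : ℝ :=
  (ν {ω | ∀ i : Fin n, ω i = b i}).toReal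

namespace S16
noncomputable def P (c : ℕ → ℝ) (n : ℕ) : ℝ := ∏ j ∈ Finset.range n, c j

variable {c : ℕ → ℝ}

lemma P_succ (n : ℕ) : P c (n+1) = P c n * c n := Finset.prod_range_succ c n

section
variable (hc : ∀ n, 0 < c n ∧ c n < 1 / 2)
include hc

lemma P_pos (n : ℕ) : 0 < P c n := by
  induction n with
  | zero => simp [P]
  | succ n ih => rw [P_succ]; exact mul_pos ih (hc n).1

lemma two_P_lt (n : ℕ) : 2 * P c (n+1) < P c n := by
  have := P_pos hc n
  rw [P_succ]; nlinarith [(hc n).2]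

lemma P_le_geom (n : ℕ) : P c n ≤ (1/2 : ℝ)^n := by
  induction n with
  | zero => simp [P]
  | succ n ih =>
    rw [P_succ, pow_succ]
    have h1 : (0:ℝ) < P c n := P_pos hc n
    have := (hc n).2
    have := (hc n).1
    nlinarith [pow_nonneg (by norm_num : (0:ℝ) ≤ 1/2) n]

lemma P_tendsto : Tendsto (P c) atTop (𝓝 0) := by
  have hg : Tendsto (fun n : ℕ => (1/2:ℝ)^n) atTop (𝓝 0) :=
    tendsto_pow_atTop_nhds_zero_of_lt_one (by norm_num) (by norm_num)
  refine squeeze_zero (fun n => (P_pos hc n).le) (fun n => P_le_geom hc n) hg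

lemma u_eq (n : ℕ) : uSym c n = P c n - P c (n+1) := by
  rw [uSym, P_succ]; ring_nf; rw [P]; ring

lemma u_pos (n : ℕ) : 0 < uSym c n := by
  have := (hc n).1; have := (hc n).2
  exact mul_pos (P_pos hc n) (by linarith)

lemma u_le_P (n : ℕ) : uSym c n ≤ P c n := by
  rw [u_eq hc]; have := P_pos hc (n+1); linarith

lemma summable_u : Summable (uSym c) := by
  refine Summable.of_nonneg_of_le (fun n => (u_pos hc n).le)
    (fun n => (u_le_P hc n).trans (P_le_geom hc n)) ?_
  exact summable_geometric_of_lt_one (by norm_num) (by norm_num)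

lemma tailsum (k : ℕ) : ∑' i, uSym c (i + k) = P c k := by
  have hs : Summable (fun i => uSym c (i + k)) := (summable_nat_add_iff k).2 (summable_u hc)
  refine HasSum.tsum_eq ?_
  rw [hs.hasSum_iff_tendsto_nat]
  have hps : ∀ N, ∑ i ∈ Finset.range N, uSym c (i + k) = P c k - P c (N + k) := by
    intro N
    induction N with
    | zero => simp
    | succ N ih =>
      rw [Finset.sum_range_succ, ih, u_eq hc]
      have : N + k + 1 = N + 1 + k := by ring
      rw [this]; ring
  simp only [hps]
  have h2 : Tendsto (fun N : ℕ => P c (N + k)) atTop (𝓝 0) :=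
    (P_tendsto hc).comp (tendsto_add_atTop_nat k)
  simpa using (tendsto_const_nhds (x := P c k)).sub h2

lemma summable_if (p : ℕ → Prop) [DecidablePred p] (s : ℕ) :
    Summable (fun n => if p n then uSym c (n + s) else 0) := by
  refine Summable.of_nonneg_of_le (fun n => ?_) (fun n => ?_)
    ((summable_nat_add_iff s).2 (summable_u hc))
  · by_cases h : p n <;> simp [h, (u_pos hc (n+s)).le]
  · by_cases h : p n <;> simp [h, (u_pos hc (n+s)).le]

lemma tsum_if_nonneg (p : ℕ → Prop) [DecidablePred p] (s : ℕ) :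
    0 ≤ ∑' n, if p n then uSym c (n + s) else 0 := by
  refine tsum_nonneg fun n => ?_
  by_cases h : p n <;> simp [h, (u_pos hc (n+s)).le]

lemma tsum_if_le (p : ℕ → Prop) [DecidablePred p] (s : ℕ) :
    (∑' n, if p n then uSym c (n + s) else 0) ≤ P c s := by
  have h1 : (∑' n, if p n then uSym c (n + s) else 0) ≤ ∑' n, uSym c (n + s) := by
    refine Summable.tsum_le_tsum (fun n => ?_) (summable_if hc p s) ((summable_nat_add_iff s).2 (summable_u hc))
    by_cases h : p n <;> simp [h, (u_pos hc (n+s)).le]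
  rw [tailsum hc] at h1; exact h1

/-- partial-sum sandwich for `piSym`. -/
lemma piSym_sandwich (ω : ℕ → Bool) (k : ℕ) :
    (∑ j ∈ Finset.range k, if ω j then uSym c j else 0) ≤ piSym c ω ∧
      piSym c ω ≤ (∑ j ∈ Finset.range k, if ω j then uSym c j else 0) + P c k := by
  have hs : Summable (fun n => if ω n then uSym c n else 0) := by
    simpa using summable_if hc (fun n => ω n = true) 0
  have hsplit := Summable.sum_add_tsum_nat_add k hs
  have htail0 : 0 ≤ ∑' i, if ω (i + k) then uSym c (i + k) else 0 := by
    simpa using tsum_if_nonneg hc (fun i => ω (i + k) = true) k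
  have htail1 : (∑' i, if ω (i + k) then uSym c (i + k) else 0) ≤ P c k := by
    simpa using tsum_if_le hc (fun i => ω (i + k) = true) k
  constructor
  · rw [piSym, ← hsplit]; linarith
  · rw [piSym, ← hsplit]; linarith

lemma piSym_mem (ω : ℕ → Bool) : piSym c ω ∈ Set.Icc (0:ℝ) 1 := by
  have h := piSym_sandwich hc ω 0
  simp [P] at h
  exact ⟨h.1, h.2⟩

lemma dec (s k : ℕ) (α β : ℕ → Bool) (hpre : ∀ n < k, α n = β n)
    (hak : α k = false) (hbk : β k = true) :
    (∑' n, if β n then uSym c (n+s) else 0) =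
      (∑' n, if α n then uSym c (n+s) else 0) +
      ((∑' n, if k < n ∧ α n = false then uSym c (n+s) else 0) +
       (P c (k+s) - 2 * P c (k+s+1)) +
       (∑' n, if k < n ∧ β n = true then uSym c (n+s) else 0)) := by
  have hsa : Summable (fun n => if α n then uSym c (n+s) else 0) :=
    summable_if hc (fun n => α n = true) s
  have hsb : Summable (fun n => if β n then uSym c (n+s) else 0) :=
    summable_if hc (fun n => β n = true) s
  have hsf1 : Summable (fun n => if k < n ∧ α n = false then uSym c (n+s) else 0) :=
    summable_if hc _ s
  have hsf2 : Summable (fun n => if k < n ∧ β n = true then uSym c (n+s) else 0) :=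
    summable_if hc _ s
  have hpt : ∀ n, (if α n then uSym c (n+s) else 0) +
      (if k < n ∧ α n = false then uSym c (n+s) else 0) =
      (if n < k then (if β n then uSym c (n+s) else 0) else if k < n then uSym c (n+s) else 0) := by
    intro n
    rcases lt_trichotomy n k with h | h | h
    · have h2 : ¬ k < n := by omega
      simp [h, h2, hpre n h]
    · subst h; simp [hak]
    · have h1 : ¬ n < k := by omega
      cases hα : α n <;> simp [h, h1, hα]
  have hsh : Summable (fun n => (if n < k then (if β n then uSym c (n+s) else 0)
      else if k < n then uSym c (n+s) else 0)) := (hsa.add hsf1).congr fun n => (hpt n)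
  have step1 : (∑' n, if α n then uSym c (n+s) else 0) +
      (∑' n, if k < n ∧ α n = false then uSym c (n+s) else 0) =
      ∑' n, (if n < k then (if β n then uSym c (n+s) else 0) else if k < n then uSym c (n+s) else 0) := by
    rw [← Summable.tsum_add hsa hsf1]
    exact tsum_congr hpt
  have step2 : (∑' n, (if n < k then (if β n then uSym c (n+s) else 0)
      else if k < n then uSym c (n+s) else 0)) =
      (∑ j ∈ Finset.range k, if β j then uSym c (j+s) else 0) + P c (k+s+1) := by
    rw [← Summable.sum_add_tsum_nat_add (k+1) hsh]
    congr 1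
    · rw [Finset.sum_range_succ]
      have h0 : (if k < k then (if β k then uSym c (k+s) else 0)
          else if k < k then uSym c (k+s) else 0) = 0 := by simp
      rw [h0, add_zero]
      refine Finset.sum_congr rfl fun j hj => ?_
      rw [Finset.mem_range] at hj
      simp [hj]
    · have he : ∀ i : ℕ, (if i + (k+1) < k then (if β (i+(k+1)) then uSym c (i+(k+1)+s) else 0)
          else if k < i + (k+1) then uSym c (i+(k+1)+s) else 0) = uSym c (i + (k+s+1)) := by
        intro i
        have h1 : ¬ (i + (k+1) < k) := by omega
        have h2 : k < i + (k+1) := by omega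
        have h3 : i + (k+1) + s = i + (k+s+1) := by omega
        simp [h1, h2, h3]
      rw [tsum_congr he, tailsum hc]
  have step3 : (∑' n, if β n then uSym c (n+s) else 0) =
      (∑ j ∈ Finset.range k, if β j then uSym c (j+s) else 0) + uSym c (k+s) +
        (∑' n, if k < n ∧ β n = true then uSym c (n+s) else 0) := by
    rw [← Summable.sum_add_tsum_nat_add (k+1) hsb]
    have h1 : ∑ j ∈ Finset.range (k+1), (if β j then uSym c (j+s) else 0) =
        (∑ j ∈ Finset.range k, if β j then uSym c (j+s) else 0) + uSym c (k+s) := by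
      rw [Finset.sum_range_succ, hbk]; simp
    rw [h1]
    have h2 : (∑' i, if β (i + (k+1)) then uSym c (i+(k+1)+s) else 0) =
        (∑' n, if k < n ∧ β n = true then uSym c (n+s) else 0) := by
      rw [← Summable.sum_add_tsum_nat_add (k+1) hsf2]
      have h3 : ∑ j ∈ Finset.range (k+1), (if k < j ∧ β j = true then uSym c (j+s) else 0) = 0 := by
        refine Finset.sum_eq_zero fun j hj => ?_
        rw [Finset.mem_range] at hj
        have : ¬ (k < j ∧ β j = true) := by intro ⟨h,_⟩; omega
        simp [this]
      rw [h3, zero_add]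
      refine tsum_congr fun i => ?_
      have h4 : k < i + (k+1) := by omega
      by_cases hb : β (i + (k+1)) <;> simp [h4, hb]
    rw [h2]
  have hu : uSym c (k+s) = P c (k+s) - P c (k+s+1) := u_eq hc (k+s)
  linarith [step1, step2, step3, hu]

lemma order_lt (k : ℕ) (α β : ℕ → Bool) (hpre : ∀ n < k, α n = β n)
    (hak : α k = true) (hbk : β k = false) : piSym c β < piSym c α := by
  have h1 := (piSym_sandwich hc α (k+1)).1
  have h2 := (piSym_sandwich hc β (k+1)).2
  have hsum : ∑ j ∈ Finset.range (k+1), (if α j then uSym c j else 0) =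
      (∑ j ∈ Finset.range k, if β j then uSym c j else 0) + uSym c k := by
    rw [Finset.sum_range_succ]
    congr 1
    · exact Finset.sum_congr rfl fun j hj => by rw [hpre j (Finset.mem_range.1 hj)]
    · simp [hak]
  have hsumb : ∑ j ∈ Finset.range (k+1), (if β j then uSym c j else 0) =
      (∑ j ∈ Finset.range k, if β j then uSym c j else 0) := by
    rw [Finset.sum_range_succ, hbk]; simp
  have h3 := two_P_lt hc (k+1)
  have h4 := two_P_lt hc k
  have hu := u_eq hc k
  have h5 := P_pos hc (k+2)
  rw [hsum] at h1
  rw [hsumb] at h2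
  linarith

lemma shift_eq (i : Bool) (ω : ℕ → Bool) : piSym c (consSeq i ω) =
    (if i then uSym c 0 else 0) + ∑' n, (if ω n then uSym c (n+1) else 0) := by
  have hs : Summable (fun n => if consSeq i ω n then uSym c n else 0) := by
    simpa using summable_if hc (fun n => consSeq i ω n = true) 0
  rw [piSym, Summable.tsum_eq_zero_add hs]
  congr 1

lemma core (A B : ℝ)
    (hABu : ∀ n, A * uSym c n ≤ uSym c (n+1) ∧ uSym c (n+1) ≤ B * uSym c n)
    (hABg : ∀ k, A * (P c k - 2*P c (k+1)) ≤ P c (k+1) - 2*P c (k+2) ∧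
               P c (k+1) - 2*P c (k+2) ≤ B * (P c k - 2*P c (k+1)))
    (i : Bool) (α β : ℕ → Bool) (hle : piSym c α ≤ piSym c β) :
    A * (piSym c β - piSym c α) ≤ piSym c (consSeq i β) - piSym c (consSeq i α) ∧
    piSym c (consSeq i β) - piSym c (consSeq i α) ≤ B * (piSym c β - piSym c α) := by
  classical
  by_cases hab : α = β
  · subst hab; simp
  have hex : ∃ n, α n ≠ β n := by
    by_contra h; push_neg at h; exact hab (funext h)
  set k := Nat.find hex with hkdef
  have hkne : α k ≠ β k := Nat.find_spec hex
  have hpre : ∀ n < k, α n = β n := fun n hn => by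
    have := Nat.find_min hex hn; simpa using this
  have hori : α k = false ∧ β k = true := by
    cases hα : α k <;> cases hβ : β k
    · exact absurd (hα.trans hβ.symm) hkne
    · exact ⟨rfl, rfl⟩
    · exact absurd hle (not_le.2 (order_lt hc k α β hpre hα hβ))
    · exact absurd (hα.trans hβ.symm) hkne
  have d0 := dec hc 0 k α β hpre hori.1 hori.2
  have d1 := dec hc 1 k α β hpre hori.1 hori.2
  simp only [Nat.add_zero] at d0
  -- abbreviations
  set T1 := ∑' n, (if k < n ∧ α n = false then uSym c n else 0) with hT1
  set T2 := ∑' n, (if k < n ∧ β n = true then uSym c n else 0) with hT2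
  set T1' := ∑' n, (if k < n ∧ α n = false then uSym c (n+1) else 0) with hT1'
  set T2' := ∑' n, (if k < n ∧ β n = true then uSym c (n+1) else 0) with hT2'
  have eq1 : piSym c β - piSym c α = T1 + (P c k - 2 * P c (k+1)) + T2 := by
    rw [piSym, piSym]; linarith [d0]
  have eq2 : piSym c (consSeq i β) - piSym c (consSeq i α) =
      T1' + (P c (k+1) - 2 * P c (k+2)) + T2' := by
    rw [shift_eq hc i α, shift_eq hc i β]
    have : P c (k+1+1) = P c (k+2) := rfl
    linarith [d1]
  -- termwise bounds
  have key : ∀ (p : ℕ → Prop) (_ : DecidablePred p),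
      A * (∑' n, if p n then uSym c n else 0) ≤ (∑' n, if p n then uSym c (n+1) else 0) ∧
      (∑' n, if p n then uSym c (n+1) else 0) ≤ B * (∑' n, if p n then uSym c n else 0) := by
    intro p hp
    have hs0 : Summable (fun n => if p n then uSym c n else 0) := by
      simpa using summable_if hc p 0
    have hs1 : Summable (fun n => if p n then uSym c (n+1) else 0) := summable_if hc p 1
    constructor
    · rw [← tsum_mul_left]
      refine Summable.tsum_le_tsum (fun n => ?_) (hs0.mul_left A) hs1
      by_cases h : p n <;> simp [h, (hABu n).1]
    · rw [← tsum_mul_left]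
      refine Summable.tsum_le_tsum (fun n => ?_) hs1 (hs0.mul_left B)
      by_cases h : p n <;> simp [h, (hABu n).2]
  have k1 := key (fun n => k < n ∧ α n = false) inferInstance
  have k2 := key (fun n => k < n ∧ β n = true) inferInstance
  have hg := hABg k
  constructor
  · have expand : A * (piSym c β - piSym c α) =
        A * T1 + A * (P c k - 2 * P c (k+1)) + A * T2 := by rw [eq1]; ring
    rw [expand, eq2]
    have := k1.1; have := k2.1
    rw [← hT1, ← hT2, ← hT1', ← hT2'] at *
    linarith [k1.1, k2.1, hg.1]
  · have expand : B * (piSym c β - piSym c α) =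
        B * T1 + B * (P c k - 2 * P c (k+1)) + B * T2 := by rw [eq1]; ring
    rw [expand, eq2]
    linarith [k1.2, k2.2, hg.2]

omit hc in
lemma lSym_append (w : List Bool) (b : Bool) :
    lSym c (w ++ [b]) = lSym c w + (if b then uSym c w.length else 0) := by
  rw [lSym, lSym]
  have hl : (w ++ [b]).length = w.length + 1 := by simp
  rw [hl, Finset.sum_range_succ]
  congr 1
  · refine Finset.sum_congr rfl fun j hj => ?_
    rw [Finset.mem_range] at hj
    rw [List.getD_append w [b] false j hj]
  · rw [List.getD_append_right _ _ _ _ (le_refl _)]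
    simp

omit hc in
lemma P_cons_len (w : List Bool) (b : Bool) :
    (∏ j ∈ Finset.range (w ++ [b]).length, c j) = P c (w.length + 1) := by
  simp [P]

lemma rSym_gapL (w : List Bool) :
    rSym c (w ++ [false]) = lSym c w + P c (w.length + 1) := by
  rw [rSym, lSym_append, P_cons_len]; simp

lemma lSym_gapR (w : List Bool) :
    lSym c (w ++ [true]) = lSym c w + uSym c w.length := by
  rw [lSym_append]; simp

lemma gap_len (w : List Bool) :
    lSym c (w ++ [true]) - rSym c (w ++ [false]) =
      P c w.length - 2 * P c (w.length + 1) := by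
  rw [rSym_gapL hc, lSym_gapR hc, u_eq hc]
  ring

/-- eventually-constant extension of a finite word -/
def extSeq (w : List Bool) (b t : Bool) : ℕ → Bool :=
  fun n => if n < w.length then w.getD n false else if n = w.length then b else t

lemma piSym_extSeq (w : List Bool) (b t : Bool) :
    piSym c (extSeq w b t) = lSym c w + (if b then uSym c w.length else 0) +
      (if t then P c (w.length + 1) else 0) := by
  set k := w.length with hk
  have hs : Summable (fun n => if extSeq w b t n then uSym c n else 0) := by
    simpa using summable_if hc (fun n => extSeq w b t n = true) 0
  rw [piSym, ← Summable.sum_add_tsum_nat_add (k+1) hs]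
  congr 1
  · rw [Finset.sum_range_succ]
    congr 1
    · rw [lSym]
      refine Finset.sum_congr rfl fun j hj => ?_
      rw [Finset.mem_range] at hj
      simp [extSeq, hj]
    · simp [extSeq, ← hk]
  · have he : ∀ i : ℕ, (if extSeq w b t (i + (k+1)) then uSym c (i+(k+1)) else 0) =
        (if t then uSym c (i + (k+1)) else 0) := by
      intro i
      have h1 : ¬ (i + (k+1) < k) := by omega
      have h2 : ¬ (i + (k+1) = k) := by omega
      simp [extSeq, h1, h2, ← hk]
    rw [tsum_congr he]
    cases t
    · simp
    · simpa using tailsum hc (k+1)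

omit hc in
lemma consSeq_extSeq (i : Bool) (w : List Bool) (b t : Bool) :
    consSeq i (extSeq w b t) = extSeq (i :: w) b t := by
  funext n
  cases n with
  | zero => simp [consSeq, extSeq]
  | succ n =>
    have h1 : (n + 1 < (i::w).length) ↔ (n < w.length) := by simp
    by_cases h : n < w.length
    · have : (i::w).getD (n+1) false = w.getD n false := rfl
      simp [consSeq, extSeq, h, this]
    · have h2 : (n+1 = (i::w).length) ↔ (n = w.length) := by simp
      by_cases h3 : n = w.length <;> simp [consSeq, extSeq, h, h3]

lemma piSym_left_endpoint (w : List Bool) :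
    piSym c (extSeq w false true) = rSym c (w ++ [false]) := by
  rw [piSym_extSeq hc, rSym_gapL hc]; simp

lemma piSym_right_endpoint (w : List Bool) :
    piSym c (extSeq w true false) = lSym c (w ++ [true]) := by
  rw [piSym_extSeq hc, lSym_gapR hc]; simp

lemma sum_range_u (k N : ℕ) : ∑ i ∈ Finset.range N, uSym c (i + k) = P c k - P c (N + k) := by
  induction N with
  | zero => simp
  | succ N ih =>
    rw [Finset.sum_range_succ, ih, u_eq hc]
    have : N + k + 1 = N + 1 + k := by ring
    rw [this]; ring

lemma sum_Ico_u (a b : ℕ) (hab : a ≤ b) :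
    ∑ i ∈ Finset.Ico a b, uSym c i = P c a - P c b := by
  rw [Finset.sum_Ico_eq_sum_range]
  have := sum_range_u hc a (b - a)
  have h2 : ∀ i, a + i = i + a := fun i => by ring
  calc ∑ i ∈ Finset.range (b-a), uSym c (a + i)
      = ∑ i ∈ Finset.range (b-a), uSym c (i + a) := by
        refine Finset.sum_congr rfl fun i _ => by rw [h2]
    _ = P c a - P c ((b-a) + a) := sum_range_u hc a (b-a)
    _ = P c a - P c b := by rw [Nat.sub_add_cancel hab]

lemma pi_notin_gap (ω : ℕ → Bool) (w : List Bool) :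
    piSym c ω ≤ rSym c (w ++ [false]) ∨ lSym c (w ++ [true]) ≤ piSym c ω := by
  classical
  set k := w.length with hk
  by_cases hag : ∀ j < k, ω j = w.getD j false
  · -- agrees on the first k digits
    have hsum : ∑ j ∈ Finset.range k, (if ω j then uSym c j else 0) = lSym c w := by
      rw [lSym]
      exact Finset.sum_congr rfl fun j hj => by rw [hag j (Finset.mem_range.1 hj)]
    cases hωk : ω k
    · left
      have h2 := (piSym_sandwich hc ω (k+1)).2
      rw [Finset.sum_range_succ, hωk, hsum] at h2
      rw [rSym_gapL hc]
      simpa using h2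
    · right
      have h1 := (piSym_sandwich hc ω (k+1)).1
      rw [Finset.sum_range_succ, hωk, hsum] at h1
      rw [lSym_gapR hc]
      simpa using h1
  · push_neg at hag
    obtain ⟨j0, hj0k, hj0⟩ := hag
    have hex : ∃ j, j < k ∧ ω j ≠ w.getD j false := ⟨j0, hj0k, hj0⟩
    set j := Nat.find hex with hjdef
    obtain ⟨hjk, hjne⟩ : j < k ∧ ω j ≠ w.getD j false := Nat.find_spec hex
    have hmin : ∀ m < j, ω m = w.getD m false := by
      intro m hm
      have := Nat.find_min hex hm
      by_contra hne
      exact this ⟨lt_trans hm hjk, hne⟩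
    have hsum : ∑ i ∈ Finset.range j, (if ω i then uSym c i else 0) =
        ∑ i ∈ Finset.range j, (if w.getD i false then uSym c i else 0) :=
      Finset.sum_congr rfl fun i hi => by rw [hmin i (Finset.mem_range.1 hi)]
    have hPu : P c (j+1) ≤ uSym c j := by
      have := two_P_lt hc j; rw [u_eq hc]; linarith
    have hterm_nonneg : ∀ i, 0 ≤ (if w.getD i false then uSym c i else 0) := by
      intro i
      by_cases h : w.getD i false = true
      · rw [if_pos h]; exact (u_pos hc i).le
      · rw [if_neg h]
    cases hωj : ω j
    · -- ω j = false, w digit = true : π below the gap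
      left
      have hwj : w.getD j false = true := by
        cases h : w.getD j false
        · exact absurd (hωj.trans h.symm) hjne
        · rfl
      have h2 := (piSym_sandwich hc ω (j+1)).2
      rw [Finset.sum_range_succ, hωj, hsum] at h2
      simp only [if_neg Bool.false_ne_true] at h2
      have hle1 : ∑ i ∈ Finset.range j, (if w.getD i false then uSym c i else 0) + uSym c j ≤
          lSym c w := by
        rw [lSym, ← hk]
        have : ∑ i ∈ Finset.range (j+1), (if w.getD i false then uSym c i else 0) =
            ∑ i ∈ Finset.range j, (if w.getD i false then uSym c i else 0) + uSym c j := by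
          rw [Finset.sum_range_succ, hwj]; simp
        rw [← this]
        refine Finset.sum_le_sum_of_subset_of_nonneg ?_ fun i _ _ => hterm_nonneg i
        exact Finset.range_subset_range.2 (by omega)
      have := P_pos hc (k+1)
      rw [rSym_gapL hc]
      linarith
    · -- ω j = true, w digit = false : π above the gap
      right
      have hwj : w.getD j false = false := by
        cases h : w.getD j false
        · rfl
        · exact absurd (hωj.trans h.symm) hjne
      have h1 := (piSym_sandwich hc ω (j+1)).1
      rw [Finset.sum_range_succ, hωj, hsum] at h1
      simp only [if_pos rfl, eq_self_iff_true, if_true] at h1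
      -- lSym (w1) = Σ_{<k} w + u k ≤ Σ_{<j} w + u j
      have hsplit : lSym c w = ∑ i ∈ Finset.range j, (if w.getD i false then uSym c i else 0) +
          ∑ i ∈ Finset.Ico j k, (if w.getD i false then uSym c i else 0) := by
        rw [lSym, ← hk, ← Finset.sum_range_add_sum_Ico _ (le_of_lt hjk)]
      have htail : ∑ i ∈ Finset.Ico j k, (if w.getD i false then uSym c i else 0) + uSym c k ≤
          uSym c j := by
        have e1 : ∑ i ∈ Finset.Ico j k, (if w.getD i false then uSym c i else 0) =
            ∑ i ∈ Finset.Ico (j+1) k, (if w.getD i false then uSym c i else 0) := by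
          rw [Finset.sum_eq_sum_Ico_succ_bot hjk, hwj]
          simp
        have e2 : ∑ i ∈ Finset.Ico (j+1) k, (if w.getD i false then uSym c i else 0) ≤
            ∑ i ∈ Finset.Ico (j+1) k, uSym c i := by
          refine Finset.sum_le_sum fun i _ => ?_
          by_cases h : w.getD i false = true
          · rw [if_pos h]
          · rw [if_neg h]; exact (u_pos hc i).le
        have e3 : ∑ i ∈ Finset.Ico (j+1) k, uSym c i + uSym c k =
            ∑ i ∈ Finset.Ico (j+1) (k+1), uSym c i := by
          rw [Finset.sum_Ico_succ_top (by omega : j+1 ≤ k)]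
        have e4 : ∑ i ∈ Finset.Ico (j+1) (k+1), uSym c i = P c (j+1) - P c (k+1) :=
          sum_Ico_u hc (j+1) (k+1) (by omega)
        have := P_pos hc (k+1)
        linarith
      rw [lSym_gapR hc, hsplit, ← hk]
      linarith

lemma cover (x : ℝ) (hx : x ∈ Set.Icc (0:ℝ) 1) :
    (∃ ω : ℕ → Bool, x = piSym c ω) ∨
    (∃ w : List Bool, rSym c (w ++ [false]) < x ∧ x < lSym c (w ++ [true])) := by
  classical
  by_cases hg : ∃ w : List Bool, rSym c (w ++ [false]) < x ∧ x < lSym c (w ++ [true])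
  · exact Or.inr hg
  push_neg at hg
  left
  set L : ℕ → ℝ := fun n => Nat.rec (0:ℝ)
    (fun n Ln => if Ln + uSym c n ≤ x then Ln + uSym c n else Ln) n with hL
  have hLzero : L 0 = 0 := rfl
  have hLsucc : ∀ n, L (n+1) = if L n + uSym c n ≤ x then L n + uSym c n else L n := fun n => rfl
  set ω : ℕ → Bool := fun n => decide (L n + uSym c n ≤ x) with hω
  have hword : ∀ n, ∃ w : List Bool, w.length = n ∧ lSym c w = L n := by
    intro n
    induction n with
    | zero => exact ⟨[], rfl, by simp [lSym, hLzero]⟩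
    | succ n ih =>
      obtain ⟨w, hwl, hwL⟩ := ih
      refine ⟨w ++ [ω n], by simp [hwl], ?_⟩
      rw [lSym_append, hwl, hwL, hLsucc]
      by_cases h : L n + uSym c n ≤ x
      · simp [hω, h]
      · simp [hω, h]
  have hInv : ∀ n, L n ≤ x ∧ x ≤ L n + P c n := by
    intro n
    induction n with
    | zero =>
      rw [hLzero]
      have : P c 0 = 1 := by simp [P]
      rw [this]
      simpa using hx
    | succ n ih =>
      rw [hLsucc]
      by_cases h : L n + uSym c n ≤ x
      · rw [if_pos h]
        refine ⟨h, ?_⟩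
        have := u_eq hc n; linarith [ih.2]
      · rw [if_neg h]
        refine ⟨ih.1, ?_⟩
        by_contra hcon
        push_neg at hcon
        obtain ⟨w, hwl, hwL⟩ := hword n
        have h1 : rSym c (w ++ [false]) < x := by rw [rSym_gapL hc, hwl, hwL]; exact hcon
        have h2 := hg w h1
        rw [lSym_gapR hc, hwl, hwL] at h2
        push_neg at h
        linarith
  have hpart : ∀ n, ∑ j ∈ Finset.range n, (if ω j then uSym c j else 0) = L n := by
    intro n
    induction n with
    | zero => simp [hLzero]
    | succ n ih =>
      rw [Finset.sum_range_succ, ih, hLsucc]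
      by_cases h : L n + uSym c n ≤ x
      · simp [hω, h]
      · simp [hω, h]
  refine ⟨ω, ?_⟩
  have hdiff : ∀ n, |x - piSym c ω| ≤ P c n := by
    intro n
    have hs := piSym_sandwich hc ω n
    rw [hpart n] at hs
    have hi := hInv n
    rw [abs_le]
    constructor <;> linarith [hs.1, hs.2, hi.1, hi.2]
  have h0 : |x - piSym c ω| ≤ 0 :=
    ge_of_tendsto' (P_tendsto hc) hdiff
  have := abs_nonpos_iff.1 h0
  linarith [sub_eq_zero.1 this]

section PHI
variable (φ : Bool → ℝ → ℝ)
variable (hφgap : ∀ (i : Bool) (w : List Bool),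
      ∀ x ∈ Set.Ioo (rSym c (w ++ [false])) (lSym c (w ++ [true])),
        φ i x =
          (lSym c ((i :: w) ++ [true]) - rSym c ((i :: w) ++ [false])) /
              (lSym c (w ++ [true]) - rSym c (w ++ [false])) * (x - rSym c (w ++ [false])) +
            rSym c ((i :: w) ++ [false]))
variable (hφcode : ∀ (i : Bool) (ω : ℕ → Bool), φ i (piSym c ω) = piSym c (consSeq i ω))

include hφgap hφcode in
lemma gap_phi (i : Bool) (w : List Bool) (x : ℝ)
    (hx : x ∈ Set.Icc (rSym c (w ++ [false])) (lSym c (w ++ [true]))) :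
    φ i x = (lSym c ((i :: w) ++ [true]) - rSym c ((i :: w) ++ [false])) /
              (lSym c (w ++ [true]) - rSym c (w ++ [false])) * (x - rSym c (w ++ [false])) +
            rSym c ((i :: w) ++ [false]) := by
  have hglen : lSym c (w ++ [true]) - rSym c (w ++ [false]) =
      P c w.length - 2 * P c (w.length + 1) := gap_len hc w
  have hglen' : lSym c ((i :: w) ++ [true]) - rSym c ((i :: w) ++ [false]) =
      P c (w.length + 1) - 2 * P c (w.length + 2) := by
    have := gap_len hc (i :: w)
    simpa using this
  have hgpos : (0:ℝ) < lSym c (w ++ [true]) - rSym c (w ++ [false]) := by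
    rw [hglen]; linarith [two_P_lt hc w.length]
  rcases eq_or_lt_of_le hx.1 with h1 | h1
  · -- x = left endpoint
    have hv : φ i (rSym c (w ++ [false])) = rSym c ((i :: w) ++ [false]) := by
      rw [← piSym_left_endpoint hc w, hφcode, consSeq_extSeq, piSym_left_endpoint hc (i :: w)]
    rw [← h1, hv]; ring
  rcases eq_or_lt_of_le hx.2 with h2 | h2
  · -- x = right endpoint
    have hv : φ i (lSym c (w ++ [true])) = lSym c ((i :: w) ++ [true]) := by
      rw [← piSym_right_endpoint hc w, hφcode, consSeq_extSeq, piSym_right_endpoint hc (i :: w)]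
    rw [h2, hv, div_mul_cancel₀ _ (ne_of_gt hgpos)]
    ring
  · exact hφgap i w x ⟨h1, h2⟩

include hφgap hφcode in
lemma gap_diff (i : Bool) (w : List Bool) (x y : ℝ)
    (hx : x ∈ Set.Icc (rSym c (w ++ [false])) (lSym c (w ++ [true])))
    (hy : y ∈ Set.Icc (rSym c (w ++ [false])) (lSym c (w ++ [true])))
    (A B : ℝ)
    (hABg : ∀ k, A * (P c k - 2*P c (k+1)) ≤ P c (k+1) - 2*P c (k+2) ∧
               P c (k+1) - 2*P c (k+2) ≤ B * (P c k - 2*P c (k+1)))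
    (hxy : x ≤ y) :
    A * (y - x) ≤ φ i y - φ i x ∧ φ i y - φ i x ≤ B * (y - x) := by
  rw [gap_phi hc φ hφgap hφcode i w x hx, gap_phi hc φ hφgap hφcode i w y hy]
  have hglen : lSym c (w ++ [true]) - rSym c (w ++ [false]) =
      P c w.length - 2 * P c (w.length + 1) := gap_len hc w
  have hglen' : lSym c ((i :: w) ++ [true]) - rSym c ((i :: w) ++ [false]) =
      P c (w.length + 1) - 2 * P c (w.length + 2) := by simpa using gap_len hc (i :: w)
  have hgpos : (0:ℝ) < P c w.length - 2 * P c (w.length + 1) := by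
    linarith [two_P_lt hc w.length]
  set k := w.length
  set G := P c k - 2 * P c (k+1) with hG
  set G' := P c (k+1) - 2 * P c (k+2) with hG'
  have hdiff : (lSym c ((i :: w) ++ [true]) - rSym c ((i :: w) ++ [false])) /
        (lSym c (w ++ [true]) - rSym c (w ++ [false])) * (y - rSym c (w ++ [false])) +
        rSym c ((i :: w) ++ [false]) -
      ((lSym c ((i :: w) ++ [true]) - rSym c ((i :: w) ++ [false])) /
        (lSym c (w ++ [true]) - rSym c (w ++ [false])) * (x - rSym c (w ++ [false])) +
        rSym c ((i :: w) ++ [false])) = G' / G * (y - x) := by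
    rw [hglen, hglen']
    ring
  rw [hdiff]
  have hg := hABg k
  have hAle : A ≤ G' / G := (le_div_iff₀ hgpos).2 (by rw [hG, hG']; linarith [hg.1])
  have hBge : G' / G ≤ B := (div_le_iff₀ hgpos).2 (by rw [hG, hG']; linarith [hg.2])
  have hyx : 0 ≤ y - x := by linarith
  exact ⟨mul_le_mul_of_nonneg_right hAle hyx, mul_le_mul_of_nonneg_right hBge hyx⟩

include hφgap hφcode in
lemma main_est (A B : ℝ)
    (hABu : ∀ n, A * uSym c n ≤ uSym c (n+1) ∧ uSym c (n+1) ≤ B * uSym c n)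
    (hABg : ∀ k, A * (P c k - 2*P c (k+1)) ≤ P c (k+1) - 2*P c (k+2) ∧
               P c (k+1) - 2*P c (k+2) ≤ B * (P c k - 2*P c (k+1)))
    (i : Bool) :
    ∀ x ∈ Set.Icc (0:ℝ) 1, ∀ y ∈ Set.Icc (0:ℝ) 1, x ≤ y →
      A * (y - x) ≤ φ i y - φ i x ∧ φ i y - φ i x ≤ B * (y - x) := by
  -- E-E case
  have hEE : ∀ α β : ℕ → Bool, piSym c α ≤ piSym c β →
      A * (piSym c β - piSym c α) ≤ φ i (piSym c β) - φ i (piSym c α) ∧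
      φ i (piSym c β) - φ i (piSym c α) ≤ B * (piSym c β - piSym c α) := by
    intro α β hle
    rw [hφcode, hφcode]
    exact core hc A B hABu hABg i α β hle
  -- E-any case
  have hEY : ∀ (α : ℕ → Bool) (y : ℝ), y ∈ Set.Icc (0:ℝ) 1 → piSym c α ≤ y →
      A * (y - piSym c α) ≤ φ i y - φ i (piSym c α) ∧
      φ i y - φ i (piSym c α) ≤ B * (y - piSym c α) := by
    intro α y hy hle
    rcases cover hc y hy with ⟨β, hβ⟩ | ⟨w, hw1, hw2⟩
    · rw [hβ] at hle ⊢
      exact hEE α β hle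
    · -- y in the open gap of w
      set q := rSym c (w ++ [false]) with hq
      have hqE : piSym c (extSeq w false true) = q := piSym_left_endpoint hc w
      have hxq : piSym c α ≤ q := by
        rcases pi_notin_gap hc α w with h | h
        · exact h
        · exfalso; linarith
      have h1 := hEE α (extSeq w false true) (by rw [hqE]; exact hxq)
      rw [hqE] at h1
      have hgy : y ∈ Set.Icc (rSym c (w ++ [false])) (lSym c (w ++ [true])) :=
        ⟨le_of_lt hw1, le_of_lt hw2⟩
      have hgq : q ∈ Set.Icc (rSym c (w ++ [false])) (lSym c (w ++ [true])) := by
        refine ⟨le_refl _, ?_⟩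
        have := gap_len hc w
        have := two_P_lt hc w.length
        linarith
      have h2 := gap_diff hc φ hφgap hφcode i w q y hgq hgy A B hABg (le_of_lt hw1)
      constructor <;> [linarith [h1.1, h2.1]; linarith [h1.2, h2.2]]
  intro x hx y hy hxy
  rcases cover hc x hx with ⟨α, hα⟩ | ⟨w, hw1, hw2⟩
  · rw [hα] at hxy ⊢
    exact hEY α y hy hxy
  · -- x in the open gap of w
    set p := lSym c (w ++ [true]) with hp
    have hpE : piSym c (extSeq w true false) = p := piSym_right_endpoint hc w
    have hgx : x ∈ Set.Icc (rSym c (w ++ [false])) (lSym c (w ++ [true])) :=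
      ⟨le_of_lt hw1, le_of_lt hw2⟩
    by_cases hyp : y ≤ p
    · exact gap_diff hc φ hφgap hφcode i w x y hgx ⟨by linarith, hyp⟩ A B hABg hxy
    · push_neg at hyp
      have hgp : p ∈ Set.Icc (rSym c (w ++ [false])) (lSym c (w ++ [true])) := by
        refine ⟨?_, le_refl _⟩
        have := gap_len hc w
        have := two_P_lt hc w.length
        linarith
      have h1 := gap_diff hc φ hφgap hφcode i w x p hgx hgp A B hABg (le_of_lt hw2)
      have h2 := hEY (extSeq w true false) y hy (by rw [hpE]; exact le_of_lt hyp)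
      rw [hpE] at h2
      constructor <;> [linarith [h1.1, h2.1]; linarith [h1.2, h2.2]]
end PHI

lemma tsum_if_gt (n s : ℕ) : (∑' j, if n < j then uSym c (j+s) else 0) = P c (n+1+s) := by
  rw [← Summable.sum_add_tsum_nat_add (n+1) (summable_if hc _ s)]
  have h1 : ∑ j ∈ Finset.range (n+1), (if n < j then uSym c (j+s) else 0) = 0 := by
    refine Finset.sum_eq_zero fun j hj => ?_
    rw [Finset.mem_range] at hj
    rw [if_neg (by omega)]
  rw [h1, zero_add]
  have h2 : ∀ i : ℕ, (if n < i + (n+1) then uSym c (i+(n+1)+s) else 0) = uSym c (i + (n+1+s)) := by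
    intro i
    rw [if_pos (by omega)]
    congr 1
    omega
  rw [tsum_congr h2, tailsum hc]

lemma tsum_if_eq (n s : ℕ) : (∑' j, if j = n then uSym c (j+s) else 0) = uSym c (n+s) := by
  rw [tsum_eq_single n (fun b hb => if_neg hb)]
  rw [if_pos rfl]

lemma r_eq (n : ℕ) :
    P c (n+1) - 2 * P c (n+2) =
      c n * (1 - 2 * c (n+1)) / (1 - 2 * c n) * (P c n - 2 * P c (n+1)) := by
  have h1 : (0:ℝ) < 1 - 2 * c n := by linarith [(hc n).2]
  have h2 : P c (n+2) = P c n * c n * c (n+1) := by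
    rw [show n+2 = (n+1)+1 from rfl, P_succ, P_succ]
  rw [h2, P_succ]
  rw [div_mul_eq_mul_div, eq_div_iff h1.ne']
  ring

omit hc in
lemma u_def (n : ℕ) : uSym c n = P c n * (1 - c n) := rfl

lemma u_succ (n : ℕ) : uSym c (n+1) = P c n * (c n * (1 - c (n+1))) := by
  rw [u_def, P_succ]; ring

end
end S16


/-- Let `c = (c_n)` with `0 < c_n < 1/2` (here `0`-indexed: `c 0 = c₁`),
`E_c` the associated symmetric Cantor set, and `φ₀, φ₁` the maps defined via the Cantor
construction of `E_c` (affine on gaps, shifting the coding on `E_c` itself). Then `φ₀` and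
`φ₁` are bi-Lipschitz contractions on `[0,1]` iff
`0 < inf_{n≥1} c_n(1−2c_{n+1})/(1−2c_n)` and `sup_{n≥1} c_n(1−2c_{n+1})/(1−2c_n) < 1`. -/
theorem stmt16 (c : ℕ → ℝ) (hc : ∀ n, 0 < c n ∧ c n < 1 / 2)
    (φ : Bool → ℝ → ℝ)
    (hφgap : ∀ (i : Bool) (w : List Bool),
      ∀ x ∈ Set.Ioo (rSym c (w ++ [false])) (lSym c (w ++ [true])),
        φ i x =
          (lSym c ((i :: w) ++ [true]) - rSym c ((i :: w) ++ [false])) /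
              (lSym c (w ++ [true]) - rSym c (w ++ [false])) * (x - rSym c (w ++ [false])) +
            rSym c ((i :: w) ++ [false]))
    (hφcode : ∀ (i : Bool) (ω : ℕ → Bool), φ i (piSym c ω) = piSym c (consSeq i ω)) :
    (∃ A B : ℝ, 0 < A ∧ A ≤ B ∧ B < 1 ∧
        ∀ i : Bool, ∀ x ∈ Set.Icc (0:ℝ) 1, ∀ y ∈ Set.Icc (0:ℝ) 1,
          A * |x - y| ≤ |φ i x - φ i y| ∧ |φ i x - φ i y| ≤ B * |x - y|) ↔
    (0 < sInf (Set.range fun n => c n * (1 - 2 * c (n + 1)) / (1 - 2 * c n)) ∧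
      BddAbove (Set.range fun n => c n * (1 - 2 * c (n + 1)) / (1 - 2 * c n)) ∧
      sSup (Set.range fun n => c n * (1 - 2 * c (n + 1)) / (1 - 2 * c n)) < 1) := by
  classical
  have hgap_pos : ∀ n, (0:ℝ) < S16.P c n - 2 * S16.P c (n+1) := fun n => by
    linarith [S16.two_P_lt hc n]
  set r : ℕ → ℝ := fun n => c n * (1 - 2 * c (n + 1)) / (1 - 2 * c n) with hr
  have hrpos : ∀ n, 0 < r n := by
    intro n
    have h1 := (hc n).1
    have h2 := (hc n).2
    have h3 := (hc (n+1)).2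
    simp only [hr]
    exact div_pos (mul_pos h1 (by linarith)) (by linarith)
  have hrP : ∀ n, S16.P c (n+1) - 2 * S16.P c (n+2) = r n * (S16.P c n - 2 * S16.P c (n+1)) := by
    intro n
    simp only [hr]
    exact S16.r_eq hc n
  constructor
  · rintro ⟨A, B, hA, hAB, hB, hbil⟩
    have key : ∀ n, A ≤ r n ∧ r n ≤ B := by
      intro n
      set α : ℕ → Bool := fun j => decide (n < j) with hα
      set β : ℕ → Bool := fun j => decide (j = n) with hβ
      have hxv : piSym c α = S16.P c (n+1) := by
        have h := S16.tsum_if_gt hc n 0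
        simp only [Nat.add_zero] at h
        rw [piSym, ← h]
        exact tsum_congr fun j => by simp [hα]
      have hyv : piSym c β = uSym c n := by
        have h := S16.tsum_if_eq hc n 0
        simp only [Nat.add_zero] at h
        rw [piSym, ← h]
        exact tsum_congr fun j => by simp [hβ]
      have hφx : φ true (piSym c α) = (if (true:Bool) then uSym c 0 else 0) + S16.P c (n+2) := by
        rw [hφcode, S16.shift_eq hc]
        congr 1
        calc (∑' j, if α j then uSym c (j+1) else 0)
            = (∑' j, if n < j then uSym c (j+1) else 0) :=
              tsum_congr fun j => by simp [hα]
          _ = S16.P c (n+2) := S16.tsum_if_gt hc n 1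
      have hφy : φ true (piSym c β) = (if (true:Bool) then uSym c 0 else 0) + uSym c (n+1) := by
        rw [hφcode, S16.shift_eq hc]
        congr 1
        calc (∑' j, if β j then uSym c (j+1) else 0)
            = (∑' j, if j = n then uSym c (j+1) else 0) :=
              tsum_congr fun j => by simp [hβ]
          _ = uSym c (n+1) := S16.tsum_if_eq hc n 1
      have h := hbil true (piSym c α) (S16.piSym_mem hc α) (piSym c β) (S16.piSym_mem hc β)
      have hu := S16.u_eq hc n
      have hu1 := S16.u_eq hc (n+1)
      have habs1 : |piSym c α - piSym c β| = S16.P c n - 2 * S16.P c (n+1) := by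
        rw [hxv, hyv, hu, abs_of_nonpos (by linarith [hgap_pos n])]
        ring
      have habs2 : |φ true (piSym c α) - φ true (piSym c β)| = S16.P c (n+1) - 2 * S16.P c (n+2) := by
        rw [hφx, hφy, hu1, abs_of_nonpos (by linarith [hgap_pos (n+1)])]
        ring
      rw [habs1, habs2, hrP n] at h
      constructor
      · exact le_of_mul_le_mul_right (by linarith [h.1]) (hgap_pos n)
      · exact le_of_mul_le_mul_right (by linarith [h.2]) (hgap_pos n)
    have hne : (Set.range r).Nonempty := ⟨r 0, ⟨0, rfl⟩⟩
    refine ⟨?_, ⟨B, ?_⟩, ?_⟩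
    · exact lt_of_lt_of_le hA (le_csInf hne (by rintro b ⟨n, rfl⟩; exact (key n).1))
    · rintro b ⟨n, rfl⟩; exact (key n).2
    · exact lt_of_le_of_lt (csSup_le hne (by rintro b ⟨n, rfl⟩; exact (key n).2)) hB
  · rintro ⟨hm, hbdd, hsup⟩
    set m := sInf (Set.range r) with hmdef
    set M := sSup (Set.range r) with hMdef
    have hbb : BddBelow (Set.range r) := ⟨0, by rintro b ⟨n, rfl⟩; exact (hrpos n).le⟩
    have hmr : ∀ n, m ≤ r n := fun n => csInf_le hbb ⟨n, rfl⟩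
    have hrM : ∀ n, r n ≤ M := fun n => le_csSup hbdd ⟨n, rfl⟩
    set A := min (m/4) (1/8:ℝ) with hA
    set B := max M (1/2:ℝ) with hB
    have hA0 : 0 < A := lt_min (by linarith) (by norm_num)
    have hAB : A ≤ B :=
      le_trans (min_le_right _ _) (le_trans (by norm_num) (le_max_right _ _))
    have hB1 : B < 1 := max_lt hsup (by norm_num)
    have hAm : A ≤ m := le_trans (min_le_left _ _) (by linarith)
    have hMB : M ≤ B := le_max_left _ _
    have hB2 : (1/2:ℝ) ≤ B := le_max_right _ _
    have hscal : ∀ n, m * (1 - 2*c n) ≤ c n * (1 - 2*c (n+1)) ∧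
        c n * (1 - 2*c (n+1)) ≤ M * (1 - 2*c n) := by
      intro n
      have h1 : (0:ℝ) < 1 - 2*c n := by linarith [(hc n).2]
      constructor
      · have h2 := hmr n
        simp only [hr] at h2
        exact (le_div_iff₀ h1).1 h2
      · have h2 := hrM n
        simp only [hr] at h2
        exact (div_le_iff₀ h1).1 h2
    have hABu : ∀ n, A * uSym c n ≤ uSym c (n+1) ∧ uSym c (n+1) ≤ B * uSym c n := by
      intro n
      obtain ⟨hs1, hs2⟩ := hscal n
      have hc0 := (hc n).1
      have hc1 := (hc n).2
      have hd0 := (hc (n+1)).1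
      have hd1 := (hc (n+1)).2
      have hP := S16.P_pos hc n
      have hA4 : A ≤ m/4 := min_le_left _ _
      have hA8 : A ≤ 1/8 := min_le_right _ _
      have hscalL : A * (1 - c n) ≤ c n * (1 - c (n+1)) := by
        by_cases hq : (1/4 : ℝ) ≤ c n
        · nlinarith
        · push_neg at hq
          nlinarith
      have hscalU : c n * (1 - c (n+1)) ≤ B * (1 - c n) := by
        nlinarith
      rw [S16.u_def, S16.u_succ hc]
      constructor
      · nlinarith [mul_le_mul_of_nonneg_left hscalL hP.le]
      · nlinarith [mul_le_mul_of_nonneg_left hscalU hP.le]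
    have hABg : ∀ k, A * (S16.P c k - 2*S16.P c (k+1)) ≤ S16.P c (k+1) - 2*S16.P c (k+2) ∧
        S16.P c (k+1) - 2*S16.P c (k+2) ≤ B * (S16.P c k - 2*S16.P c (k+1)) := by
      intro k
      rw [hrP k]
      have hg := hgap_pos k
      constructor
      · exact mul_le_mul_of_nonneg_right (le_trans hAm (hmr k)) hg.le
      · exact mul_le_mul_of_nonneg_right (le_trans (hrM k) hMB) hg.le
    refine ⟨A, B, hA0, hAB, hB1, ?_⟩
    intro i x hx y hy
    rcases le_total x y with hxy | hxy
    · have h := S16.main_est hc φ hφgap hφcode A B hABu hABg i x hx y hy hxy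
      have hd : 0 ≤ φ i y - φ i x := le_trans (by nlinarith) h.1
      rw [abs_sub_comm x y, abs_sub_comm (φ i x) (φ i y),
        abs_of_nonneg (by linarith : (0:ℝ) ≤ y - x), abs_of_nonneg hd]
      exact h
    · have h := S16.main_est hc φ hφgap hφcode A B hABu hABg i y hy x hx hxy
      have hd : 0 ≤ φ i x - φ i y := le_trans (by nlinarith) h.1
      rw [abs_of_nonneg (by linarith : (0:ℝ) ≤ x - y), abs_of_nonneg hd]
      exact h
end

section
/- There exists a symmetric Cantor set E_c (associated with a sequence c = (c_n) with c_n ∈ {1/3, 1/4} for all n) such that E_c is the attractor of a bi-Lipschitz IFS {φ_0, φ_1} on [0,1], and the box dimension of E_c does not exist, i.e., the lower box dimension of E_c is strictly smaller than its upper box dimension. -/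
open Filter Set Metric MeasureTheory Topology
open scoped ENNReal

namespace S17

/-- ratio sequence -/
noncomputable def cc : ℕ → ℝ := fun n => if Nat.log 4 n % 2 = 1 then 1/4 else 1/3

lemma cc_cases (n : ℕ) : cc n = 1/3 ∨ cc n = 1/4 := by
  unfold cc; split <;> simp

lemma cc_pos (n : ℕ) : 0 < cc n := by rcases cc_cases n with h | h <;> rw [h] <;> norm_num

lemma cc_le (n : ℕ) : cc n ≤ 1/3 := by rcases cc_cases n with h | h <;> rw [h] <;> norm_num

lemma cc_ge (n : ℕ) : 1/4 ≤ cc n := by rcases cc_cases n with h | h <;> rw [h] <;> norm_num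

noncomputable def P (n : ℕ) : ℝ := ∏ j ∈ Finset.range n, cc j

lemma P_pos (n : ℕ) : 0 < P n := Finset.prod_pos fun j _ => cc_pos j

lemma P_succ (n : ℕ) : P (n + 1) = P n * cc n := Finset.prod_range_succ _ _

lemma P_zero : P 0 = 1 := Finset.prod_range_zero _

lemma P_le_pow (n : ℕ) : P n ≤ (1/3 : ℝ) ^ n := by
  unfold P
  calc ∏ j ∈ Finset.range n, cc j ≤ ∏ j ∈ Finset.range n, (1/3 : ℝ) :=
        Finset.prod_le_prod (fun j _ => (cc_pos j).le) (fun j _ => cc_le j)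
    _ = (1/3 : ℝ) ^ n := by simp

lemma P_succ_le (n : ℕ) : 3 * P (n + 1) ≤ P n := by
  rw [P_succ]
  nlinarith [P_pos n, cc_le n]

lemma P_anti : ∀ {m n : ℕ}, m ≤ n → P n ≤ P m := by
  intro m n h
  induction n with
  | zero => simp_all
  | succ k ih =>
    rcases Nat.lt_or_ge m (k+1) with h' | h'
    · have := ih (Nat.lt_succ_iff.mp h')
      nlinarith [P_succ_le k, P_pos (k+1)]
    · have : m = k + 1 := le_antisymm h h'
      simp [this]

lemma P_tendsto : Tendsto P atTop (𝓝 0) := by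
  have h1 : Tendsto (fun n : ℕ => (1/3 : ℝ) ^ n) atTop (𝓝 0) := by
    apply tendsto_pow_atTop_nhds_zero_of_lt_one <;> norm_num
  exact tendsto_of_tendsto_of_tendsto_of_le_of_le tendsto_const_nhds h1
    (fun n => (P_pos n).le) P_le_pow

noncomputable def u (n : ℕ) : ℝ := P n * (1 - cc n)

lemma u_eq (n : ℕ) : u n = P n - P (n + 1) := by rw [u, P_succ]; ring

lemma u_nonneg (n : ℕ) : 0 ≤ u n := by
  rw [u_eq]; nlinarith [P_succ_le n, P_pos (n+1)]

lemma u_le_P (n : ℕ) : u n ≤ P n := by rw [u_eq]; nlinarith [P_pos (n+1)]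

lemma u_le_pow (n : ℕ) : u n ≤ (1/3 : ℝ) ^ n := le_trans (u_le_P n) (P_le_pow n)

lemma summable_u : Summable u :=
  Summable.of_nonneg_of_le u_nonneg u_le_pow (summable_geometric_of_lt_one (by norm_num) (by norm_num))

lemma tsum_u_tail (k : ℕ) : ∑' m, u (m + k) = P k := by
  have hs : Summable fun m => u (m + k) := (summable_nat_add_iff k).2 summable_u
  have hpart : ∀ M : ℕ, ∑ m ∈ Finset.range M, u (m + k) = P k - P (k + M) := by
    intro M
    induction M with
    | zero => simp
    | succ L ih =>
      rw [Finset.sum_range_succ, ih, u_eq, Nat.add_comm L k]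
      have : k + (L + 1) = (k + L) + 1 := rfl
      rw [this]
      ring
  have h2 : Tendsto (fun M => ∑ m ∈ Finset.range M, u (m + k)) atTop (𝓝 (P k)) := by
    simp only [hpart]
    have h3 : Tendsto (fun M : ℕ => P (k + M)) atTop (𝓝 0) :=
      P_tendsto.comp (tendsto_add_atTop_nat k |>.comp (tendsto_id)) |>.comp tendsto_id |>.congr (by simp [Nat.add_comm])
    simpa using tendsto_const_nhds.sub h3
  exact tendsto_nhds_unique hs.hasSum.tendsto_sum_nat h2

lemma u_ratio_lo (n : ℕ) : 2/9 * u n ≤ u (n + 1) := by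
  have h : u (n+1) = P n * (cc n * (1 - cc (n+1))) := by rw [u, P_succ]; ring
  rw [h, u]
  have := P_pos n
  rcases cc_cases n with h1 | h1 <;> rcases cc_cases (n+1) with h2 | h2 <;>
    rw [h1, h2] <;> nlinarith

lemma u_ratio_hi (n : ℕ) : u (n + 1) ≤ 3/8 * u n := by
  have h : u (n+1) = P n * (cc n * (1 - cc (n+1))) := by rw [u, P_succ]; ring
  rw [h, u]
  have := P_pos n
  rcases cc_cases n with h1 | h1 <;> rcases cc_cases (n+1) with h2 | h2 <;>
    rw [h1, h2] <;> nlinarith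


lemma uSym_cc : uSym cc = u := rfl

noncomputable def π (ω : ℕ → Bool) : ℝ := piSym cc ω

lemma pi_eq (ω : ℕ → Bool) : π ω = ∑' n, if ω n then u n else 0 := rfl

lemma term_nonneg (ω : ℕ → Bool) (n : ℕ) : 0 ≤ if ω n then u n else 0 := by
  split <;> simp [u_nonneg]

lemma term_le (ω : ℕ → Bool) (n : ℕ) : (if ω n then u n else 0) ≤ u n := by
  split <;> simp [u_nonneg]

lemma summable_term (ω : ℕ → Bool) : Summable fun n => if ω n then u n else 0 :=
  Summable.of_nonneg_of_le (term_nonneg ω) (term_le ω) summable_u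

lemma pi_nonneg (ω : ℕ → Bool) : 0 ≤ π ω :=
  tsum_nonneg (term_nonneg ω)

lemma pi_le_one (ω : ℕ → Bool) : π ω ≤ 1 := by
  rw [pi_eq]
  calc (∑' n, if ω n then u n else 0) ≤ ∑' n, u n :=
        Summable.tsum_le_tsum (term_le ω) (summable_term ω) summable_u
    _ = P 0 := by simpa using tsum_u_tail 0
    _ = 1 := P_zero

lemma zero_mem : (0 : ℝ) ∈ symCantor cc :=
  ⟨fun _ => false, by simp [piSym]⟩

lemma one_mem : (1 : ℝ) ∈ symCantor cc := by
  refine ⟨fun _ => true, ?_⟩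
  show π (fun _ => true) = 1
  rw [pi_eq]
  simpa [P_zero] using tsum_u_tail 0

lemma pi_mem (ω : ℕ → Bool) : π ω ∈ symCantor cc := ⟨ω, rfl⟩

lemma E_subset : symCantor cc ⊆ Icc 0 1 := by
  rintro x ⟨ω, rfl⟩
  exact ⟨pi_nonneg ω, pi_le_one ω⟩

lemma E_compact : IsCompact (symCantor cc) := by
  have hcont : Continuous (piSym cc) := by
    apply continuous_tsum (u := u)
    · intro n
      exact Continuous.comp (continuous_of_discreteTopology
        (f := fun b : Bool => if b then uSym cc n else 0)) (continuous_apply n)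
    · exact summable_u
    · intro n ω
      show |if ω n = true then u n else 0| ≤ u n
      rw [abs_of_nonneg (term_nonneg ω n)]
      exact term_le ω n
  exact isCompact_range hcont

/-- difference sequence -/
lemma master (ω ω' : ℕ → Bool) (k : ℕ) (hag : ∀ j < k, ω j = ω' j)
    (h1 : ω k = false) (h2 : ω' k = true) :
    P k / 3 ≤ π ω' - π ω ∧ π ω' - π ω ≤ P k ∧
    ∀ i : Bool, 5/72 * (π ω' - π ω) ≤ π (consSeq i ω') - π (consSeq i ω) ∧
      π (consSeq i ω') - π (consSeq i ω) ≤ 19/36 * (π ω' - π ω) := by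
  set F : ℕ → ℝ := fun n => (if ω' n then u n else 0) - (if ω n then u n else 0) with hF
  have hsF : Summable F := (summable_term ω').sub (summable_term ω)
  have hD : π ω' - π ω = ∑' n, F n := (Summable.tsum_sub (summable_term ω') (summable_term ω)).symm
  have hFzero : ∀ j < k, F j = 0 := by
    intro j hj; simp [hF, hag j hj]
  have hFk : F k = u k := by simp [hF, h1, h2]
  have hFabs : ∀ n, |F n| ≤ u n := by
    intro n
    simp only [hF]
    rcases Bool.dichotomy (ω n) with h | h <;> rcases Bool.dichotomy (ω' n) with h' | h' <;>
      simp [h, h', abs_of_nonneg, u_nonneg n, abs_of_nonpos]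
  -- split D at k+1
  have hsplit := (Summable.sum_add_tsum_nat_add (k+1) hsF).symm
  have hhead : ∑ n ∈ Finset.range (k+1), F n = u k := by
    rw [Finset.sum_range_succ, hFk, Finset.sum_eq_zero (fun j hj => hFzero j (Finset.mem_range.mp hj)), zero_add]
  set R := ∑' m, F (m + (k+1)) with hR
  have hDR : π ω' - π ω = u k + R := by rw [hD, hsplit, hhead]
  have hsFtail : Summable fun m => F (m + (k+1)) := (summable_nat_add_iff (k+1)).2 hsF
  have hsutail : Summable fun m => u (m + (k+1)) := (summable_nat_add_iff (k+1)).2 summable_u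
  have hR_hi : R ≤ P (k+1) := by
    rw [hR, ← tsum_u_tail (k+1)]
    exact Summable.tsum_le_tsum (fun m => (abs_le.mp (hFabs _)).2) hsFtail hsutail
  have hR_lo : -P (k+1) ≤ R := by
    have : (∑' m, -u (m + (k+1))) ≤ R := by
      rw [hR]
      exact Summable.tsum_le_tsum (fun m => (abs_le.mp (hFabs _)).1) hsutail.neg hsFtail
    rwa [tsum_neg, tsum_u_tail (k+1)] at this
  have hD_lo : P k / 3 ≤ π ω' - π ω := by
    rw [hDR, u_eq]
    have := P_succ_le k
    linarith
  have hD_hi : π ω' - π ω ≤ P k := by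
    rw [hDR, u_eq]
    have := P_pos (k+1)
    linarith
  refine ⟨hD_lo, hD_hi, ?_⟩
  intro i
  -- shifted difference
  set G : ℕ → ℝ := fun m => (if ω' m then u (m+1) else 0) - (if ω m then u (m+1) else 0) with hG
  have hterm' : ∀ (σ : ℕ → Bool), Summable fun m => if σ m then u (m+1) else 0 := by
    intro σ
    apply Summable.of_nonneg_of_le (fun m => by split <;> simp [u_nonneg]) (fun m => ?_)
      ((summable_nat_add_iff 1).2 summable_u)
    split <;> simp [u_nonneg]
  have hsG : Summable G := (hterm' ω').sub (hterm' ω)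
  have hpicons : ∀ (σ : ℕ → Bool), π (consSeq i σ) =
      (if i then u 0 else 0) + ∑' m, if σ m then u (m+1) else 0 := by
    intro σ
    rw [pi_eq, ← Summable.sum_add_tsum_nat_add 1 (summable_term (consSeq i σ))]
    have e1 : ∑ n ∈ Finset.range 1, (if consSeq i σ n then u n else 0) = (if i then u 0 else 0) := by
      simp [consSeq]
    have e2 : (∑' m, if consSeq i σ (m+1) then u (m+1) else 0)
        = ∑' m, if σ m then u (m+1) else 0 := by
      apply tsum_congr
      intro m
      have : consSeq i σ (m + 1) = σ m := by simp [consSeq]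
      rw [this]
    rw [e1, e2]
  have hΔ : π (consSeq i ω') - π (consSeq i ω) = ∑' m, G m := by
    rw [hpicons ω', hpicons ω]
    simp only [hG]
    rw [Summable.tsum_sub (hterm' ω') (hterm' ω)]
    ring
  -- termwise bound for G - (43/144) F
  have hkey : ∀ m, |G m - 43/144 * F m| ≤ if m < k then 0 else 11/144 * u m := by
    intro m
    by_cases hm : m < k
    · simp [hF, hG, hag m hm, hm]
    · simp only [hm, if_false]
      have hlo := u_ratio_lo m
      have hhi := u_ratio_hi m
      have hun := u_nonneg m
      rcases Bool.dichotomy (ω m) with h | h <;> rcases Bool.dichotomy (ω' m) with h' | h' <;>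
        simp only [hF, hG, h, h', if_true, if_false, Bool.false_eq_true, sub_zero, zero_sub,
          sub_self, mul_zero, abs_neg, abs_zero] <;>
        (first
          | linarith
          | (rw [abs_le]; exact ⟨by linarith, by linarith⟩))
  have hsGF : Summable fun m => G m - 43/144 * F m := hsG.sub (hsF.mul_left _)
  have hsbound : Summable fun m => if m < k then (0:ℝ) else 11/144 * u m := by
    refine Summable.of_nonneg_of_le (fun m => ?_) (fun m => ?_) (summable_u.mul_left (11/144))
    · split
      · exact le_rfl
      · exact mul_nonneg (by norm_num) (u_nonneg m)
    · split
      · exact mul_nonneg (by norm_num) (u_nonneg m)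
      · exact le_rfl
  have htsbound : ∑' m, (if m < k then (0:ℝ) else 11/144 * u m) = 11/144 * P k := by
    rw [← Summable.sum_add_tsum_nat_add k hsbound]
    have : ∑ m ∈ Finset.range k, (if m < k then (0:ℝ) else 11/144 * u m) = 0 :=
      Finset.sum_eq_zero fun m hm => by simp [Finset.mem_range.mp hm]
    rw [this, zero_add]
    rw [← tsum_u_tail k, ← tsum_mul_left]
    apply tsum_congr
    intro m
    simp
  have hZ_hi : (∑' m, (G m - 43/144 * F m)) ≤ 11/144 * P k := by
    rw [← htsbound]
    exact Summable.tsum_le_tsum (fun m => (abs_le.mp (hkey m)).2.trans_eq rfl) hsGF hsbound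
  have hZ_lo : -(11/144 * P k) ≤ ∑' m, (G m - 43/144 * F m) := by
    have : (∑' m, -(if m < k then (0:ℝ) else 11/144 * u m)) ≤ ∑' m, (G m - 43/144 * F m) := by
      refine Summable.tsum_le_tsum (fun m => ?_) hsbound.neg hsGF
      have := (abs_le.mp (hkey m)).1
      linarith [this]
    rwa [tsum_neg, htsbound] at this
  have htsub : ∑' m, (G m - 43/144 * F m) = (∑' m, G m) - 43/144 * ∑' m, F m := by
    rw [Summable.tsum_sub hsG (hsF.mul_left _), tsum_mul_left]
  rw [htsub, ← hΔ, ← hD] at hZ_hi hZ_lo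
  have hPk3 : P k ≤ 3 * (π ω' - π ω) := by linarith
  constructor <;> linarith


lemma E_nonempty : (symCantor cc).Nonempty := ⟨0, zero_mem⟩

local notation "E" => symCantor cc

lemma first_diff {ω ω' : ℕ → Bool} (h : ω ≠ ω') :
    ∃ k, (∀ j < k, ω j = ω' j) ∧ ω k ≠ ω' k := by
  have hne : ∃ n, ω n ≠ ω' n := Function.ne_iff.mp h
  refine ⟨Nat.find hne, fun j hj => ?_, Nat.find_spec hne⟩
  by_contra hj'
  exact Nat.find_min hne hj hj'

lemma pi_strict {ω ω' : ℕ → Bool} {k : ℕ} (hag : ∀ j < k, ω j = ω' j)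
    (h1 : ω k = false) (h2 : ω' k = true) : π ω < π ω' := by
  have h := (master ω ω' k hag h1 h2).1
  have := P_pos k
  linarith

lemma pi_injective : Function.Injective π := by
  intro ω ω' h
  by_contra hne
  obtain ⟨k, hag, hk⟩ := first_diff hne
  rcases Bool.dichotomy (ω k) with h1 | h1 <;> rcases Bool.dichotomy (ω' k) with h2 | h2
  · exact hk (h1.trans h2.symm)
  · exact absurd h (ne_of_lt (pi_strict hag h1 h2))
  · exact absurd h.symm (ne_of_lt (pi_strict (fun j hj => (hag j hj).symm) h2 h1))
  · exact hk (h1.trans h2.symm)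

noncomputable def φcore (i : Bool) (x : ℝ) : ℝ := π (consSeq i (Function.invFun π x))

lemma φcore_mem (i : Bool) (x : ℝ) : φcore i x ∈ E := ⟨_, rfl⟩

lemma φcore_pi (i : Bool) (ω : ℕ → Bool) : φcore i (π ω) = π (consSeq i ω) := by
  have h : π (Function.invFun π (π ω)) = π ω := Function.invFun_eq ⟨ω, rfl⟩
  rw [φcore, pi_injective h]

lemma core_pair {x y : ℝ} (hx : x ∈ E) (hy : y ∈ E) (hxy : x ≤ y) (i : Bool) :
    5/72 * (y - x) ≤ φcore i y - φcore i x ∧ φcore i y - φcore i x ≤ 19/36 * (y - x) := by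
  rcases eq_or_lt_of_le hxy with rfl | hlt
  · simp
  · obtain ⟨ω, rfl⟩ := hx
    obtain ⟨ω', rfl⟩ := hy
    have hne : ω ≠ ω' := fun h => absurd (congrArg π h) (ne_of_lt hlt)
    obtain ⟨k, hag, hk⟩ := first_diff hne
    rcases Bool.dichotomy (ω k) with h1 | h1 <;> rcases Bool.dichotomy (ω' k) with h2 | h2
    · exact absurd (h1.trans h2.symm) hk
    · have := (master ω ω' k hag h1 h2).2.2 i
      rw [show piSym cc ω = π ω from rfl, show piSym cc ω' = π ω' from rfl,
        φcore_pi, φcore_pi]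
      exact this
    · have := pi_strict (fun j hj => (hag j hj).symm) h2 h1
      exact absurd hlt (not_lt.mpr this.le)
    · exact absurd (h1.trans h2.symm) hk

noncomputable def aP (x : ℝ) : ℝ := sSup (E ∩ Iic x)
noncomputable def bP (x : ℝ) : ℝ := sInf (E ∩ Ici x)

lemma aP_spec {x : ℝ} (hx : x ∈ Icc (0:ℝ) 1) : aP x ∈ E ∧ aP x ≤ x := by
  have hcpt : IsCompact (E ∩ Iic x) := E_compact.inter_right isClosed_Iic
  have hne : (E ∩ Iic x).Nonempty := ⟨0, zero_mem, hx.1⟩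
  have hmem := hcpt.sSup_mem hne
  exact ⟨hmem.1, hmem.2⟩

lemma bP_spec {x : ℝ} (hx : x ∈ Icc (0:ℝ) 1) : bP x ∈ E ∧ x ≤ bP x := by
  have hcpt : IsCompact (E ∩ Ici x) := E_compact.inter_right isClosed_Ici
  have hne : (E ∩ Ici x).Nonempty := ⟨1, one_mem, hx.2⟩
  have hmem := hcpt.sInf_mem hne
  exact ⟨hmem.1, hmem.2⟩

lemma aP_eq {x : ℝ} (hx : x ∈ E) : aP x = x := by
  have hE01 : x ∈ Icc (0:ℝ) 1 := by
    obtain ⟨ω, rfl⟩ := hx; exact ⟨pi_nonneg ω, pi_le_one ω⟩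
  refine le_antisymm (aP_spec hE01).2 ?_
  exact le_csSup (E_compact.inter_right isClosed_Iic).bddAbove ⟨hx, Set.self_mem_Iic⟩

lemma bP_le_of_mem {x y : ℝ} (hy : y ∈ E) (hxy : x ≤ y) : bP x ≤ y :=
  csInf_le (E_compact.inter_right isClosed_Ici).bddBelow ⟨hy, hxy⟩

lemma le_aP_of_mem {x y : ℝ} (hy : y ∈ E) (hxy : y ≤ x) : y ≤ aP x :=
  le_csSup (E_compact.inter_right isClosed_Iic).bddAbove ⟨hy, hxy⟩

noncomputable def Φ (i : Bool) (x : ℝ) : ℝ :=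
  φcore i (aP x) + (x - aP x) * ((φcore i (bP x) - φcore i (aP x)) / (bP x - aP x))

lemma Φ_eq_core {x : ℝ} (hx : x ∈ E) (i : Bool) : Φ i x = φcore i x := by
  rw [Φ, aP_eq hx]; ring

lemma Φ_side {z : ℝ} (hz : z ∈ Icc (0:ℝ) 1) (i : Bool) :
    (5/72 * (z - aP z) ≤ Φ i z - φcore i (aP z) ∧ Φ i z - φcore i (aP z) ≤ 19/36 * (z - aP z)) ∧
    (5/72 * (bP z - z) ≤ φcore i (bP z) - Φ i z ∧ φcore i (bP z) - Φ i z ≤ 19/36 * (bP z - z)) := by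
  obtain ⟨haE, haz⟩ := aP_spec hz
  obtain ⟨hbE, hzb⟩ := bP_spec hz
  have hab : aP z ≤ bP z := haz.trans hzb
  rcases eq_or_lt_of_le hab with heq | hlt
  · have hza : aP z = z := le_antisymm haz (heq ▸ hzb)
    have hzb' : bP z = z := by rw [← heq, hza]
    have hΦ : Φ i z = φcore i z := by rw [Φ, hza, sub_self, zero_mul, add_zero]
    rw [hΦ, hza, hzb']
    refine ⟨⟨by simp, by simp⟩, ⟨by simp, by simp⟩⟩
  · have hd : bP z - aP z > 0 := by linarith
    obtain ⟨hs, ht⟩ := core_pair haE hbE hab i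
    set sl := (φcore i (bP z) - φcore i (aP z)) / (bP z - aP z) with hsl
    have hsl_lo : 5/72 ≤ sl := by
      rw [hsl, le_div_iff₀ hd]; linarith
    have hsl_hi : sl ≤ 19/36 := by
      rw [hsl, div_le_iff₀ hd]; linarith
    have hmul : (bP z - aP z) * sl = φcore i (bP z) - φcore i (aP z) := by
      rw [hsl]; field_simp
    have hΦ : Φ i z = φcore i (aP z) + (z - aP z) * sl := rfl
    constructor
    · rw [hΦ]
      constructor <;> nlinarith [haz, hzb]
    · have : φcore i (bP z) - Φ i z = (bP z - z) * sl := by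
        have hne : bP z - aP z ≠ 0 := ne_of_gt hd
        rw [hΦ, hsl]; field_simp; ring
      rw [this]
      constructor <;> nlinarith [haz, hzb]

lemma Φ_inc {x y : ℝ} (hx : x ∈ Icc (0:ℝ) 1) (hy : y ∈ Icc (0:ℝ) 1) (hxy : x ≤ y) (i : Bool) :
    5/72 * (y - x) ≤ Φ i y - Φ i x ∧ Φ i y - Φ i x ≤ 19/36 * (y - x) := by
  obtain ⟨haxE, hax⟩ := aP_spec hx
  obtain ⟨hbxE, hxb⟩ := bP_spec hx
  obtain ⟨hayE, hay⟩ := aP_spec hy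
  obtain ⟨hbyE, hyb⟩ := bP_spec hy
  by_cases h : bP x ≤ aP y
  · obtain ⟨⟨hl1, hl2⟩, ⟨_hl3, _hl4⟩⟩ := Φ_side hx i
    obtain ⟨⟨_hr1, _hr2⟩, ⟨hr3, hr4⟩⟩ := Φ_side hx i
    obtain ⟨⟨hy1, hy2⟩, _⟩ := Φ_side hy i
    obtain ⟨hm1, hm2⟩ := core_pair hbxE hayE h i
    constructor <;> linarith
  · push_neg at h
    have key : ∀ e ∈ E, ¬(x ≤ e ∧ e ≤ y) := by
      rintro e he ⟨h1, h2⟩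
      have hb : bP x ≤ e := bP_le_of_mem he h1
      have ha : e ≤ aP y := le_aP_of_mem he h2
      linarith
    have haxy : aP x = aP y := by
      apply le_antisymm
      · exact le_aP_of_mem haxE (hax.trans hxy)
      · refine le_aP_of_mem hayE ?_
        by_contra hcon
        push_neg at hcon
        exact key _ hayE ⟨hcon.le, hay⟩
    have hbxy : bP x = bP y := by
      apply le_antisymm
      · exact bP_le_of_mem hbyE (hxy.trans hyb)
      · refine bP_le_of_mem hbxE ?_
        by_contra hcon
        push_neg at hcon
        exact key _ hbxE ⟨hxb, hcon.le⟩
    have hab : aP x < bP x := by rw [haxy]; exact h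
    obtain ⟨hs, ht⟩ := core_pair haxE hbxE hab.le i
    have hd : bP x - aP x > 0 := by linarith
    set sl := (φcore i (bP x) - φcore i (aP x)) / (bP x - aP x) with hsl
    have hsl_lo : 5/72 ≤ sl := by rw [hsl, le_div_iff₀ hd]; linarith
    have hsl_hi : sl ≤ 19/36 := by rw [hsl, div_le_iff₀ hd]; linarith
    have hdiff : Φ i y - Φ i x = (y - x) * sl := by
      rw [Φ, Φ, ← haxy, ← hbxy, ← hsl]
      ring
    rw [hdiff]
    constructor <;> nlinarith

lemma φcore_nonneg (i : Bool) (x : ℝ) : 0 ≤ φcore i x := pi_nonneg _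
lemma φcore_le_one (i : Bool) (x : ℝ) : φcore i x ≤ 1 := pi_le_one _

lemma Φ_mapsTo (i : Bool) : Set.MapsTo (Φ i) (Icc (0:ℝ) 1) (Icc (0:ℝ) 1) := by
  intro x hx
  obtain ⟨⟨hl1, _⟩, ⟨hr1, _⟩⟩ := Φ_side hx i
  obtain ⟨_, hax⟩ := aP_spec hx
  obtain ⟨_, hxb⟩ := bP_spec hx
  constructor
  · have := φcore_nonneg i (aP x)
    nlinarith
  · have := φcore_le_one i (bP x)
    nlinarith

lemma Φ_lip {x y : ℝ} (hx : x ∈ Icc (0:ℝ) 1) (hy : y ∈ Icc (0:ℝ) 1) (i : Bool) :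
    5/72 * |x - y| ≤ |Φ i x - Φ i y| ∧ |Φ i x - Φ i y| ≤ 19/36 * |x - y| := by
  rcases le_total x y with h | h
  · obtain ⟨h1, h2⟩ := Φ_inc hx hy h i
    have e1 : |x - y| = y - x := by rw [abs_sub_comm]; exact abs_of_nonneg (by linarith)
    have e2 : |Φ i x - Φ i y| = Φ i y - Φ i x := by
      rw [abs_sub_comm]; exact abs_of_nonneg (by linarith)
    rw [e1, e2]; exact ⟨h1, h2⟩
  · obtain ⟨h1, h2⟩ := Φ_inc hy hx h i
    have e1 : |x - y| = x - y := abs_of_nonneg (by linarith)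
    have e2 : |Φ i x - Φ i y| = Φ i x - Φ i y := abs_of_nonneg (by linarith)
    rw [e1, e2]; exact ⟨by linarith, by linarith⟩

lemma image_eq : E = Φ false '' E ∪ Φ true '' E := by
  apply Set.Subset.antisymm
  · rintro e ⟨ω, rfl⟩
    have hcons : consSeq (ω 0) (fun n => ω (n+1)) = ω := by
      funext n
      cases n with
      | zero => simp [consSeq]
      | succ m => simp [consSeq]
    have hx : π (fun n => ω (n+1)) ∈ E := ⟨_, rfl⟩
    have hval : Φ (ω 0) (π (fun n => ω (n+1))) = piSym cc ω := by
      rw [Φ_eq_core hx, φcore_pi, hcons]; rfl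
    rcases Bool.dichotomy (ω 0) with h0 | h0
    · left; exact ⟨_, hx, by rw [← h0, hval]⟩
    · right; exact ⟨_, hx, by rw [← h0, hval]⟩
  · rintro e (⟨x, hx, rfl⟩ | ⟨x, hx, rfl⟩) <;> rw [Φ_eq_core hx] <;> exact φcore_mem _ _


/-! ### upper bounds on covering numbers -/

lemma mem_coverSet {δ : ℝ} (s : Finset ℝ)
    (h : ∀ x ∈ E, ∃ y ∈ s, |x - y| ≤ δ / 2) :
    s.card ∈ {n : ℕ | ∃ c : Fin n → ℝ, E ⊆ ⋃ i, Metric.closedBall (c i) (δ / 2)} := by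
  refine ⟨fun i => (s.equivFin.symm i : ℝ), fun x hx => ?_⟩
  obtain ⟨y, hy, hd⟩ := h x hx
  refine Set.mem_iUnion.mpr ⟨s.equivFin ⟨y, hy⟩, ?_⟩
  rw [Metric.mem_closedBall, Real.dist_eq]
  simpa using hd

lemma coverNum_le_of_forall {δ : ℝ} (s : Finset ℝ)
    (h : ∀ x ∈ E, ∃ y ∈ s, |x - y| ≤ δ / 2) : coverNum E δ ≤ s.card :=
  Nat.sInf_le (mem_coverSet s h)

/-- truncation: `π ω` lies within `P n` above `π (trunc ω n)`. -/
def trunc (ω : ℕ → Bool) (n : ℕ) : ℕ → Bool := fun k => if k < n then ω k else false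

lemma trunc_bounds (ω : ℕ → Bool) (n : ℕ) :
    π (trunc ω n) ≤ π ω ∧ π ω ≤ π (trunc ω n) + P n := by
  set F : ℕ → ℝ := fun k => (if ω k then u k else 0) - (if trunc ω n k then u k else 0) with hF
  have hsF : Summable F := (summable_term ω).sub (summable_term (trunc ω n))
  have hD : π ω - π (trunc ω n) = ∑' k, F k := by
    rw [pi_eq, pi_eq]; exact (Summable.tsum_sub (summable_term ω) (summable_term (trunc ω n))).symm
  have hFhead : ∀ k ∈ Finset.range n, F k = 0 := by
    intro k hk
    simp [hF, trunc, Finset.mem_range.mp hk]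
  have hsplit := (Summable.sum_add_tsum_nat_add n hsF).symm
  have hD2 : π ω - π (trunc ω n) = ∑' m, F (m + n) := by
    rw [hD, hsplit, Finset.sum_eq_zero hFhead, zero_add]
  have hsFtail : Summable fun m => F (m + n) := (summable_nat_add_iff n).2 hsF
  have hsutail : Summable fun m => u (m + n) := (summable_nat_add_iff n).2 summable_u
  have hFlo : ∀ m, 0 ≤ F (m + n) := by
    intro m
    have : trunc ω n (m + n) = false := by simp [trunc]
    rw [hF]; simp only [this]
    split <;> simp [u_nonneg]
  have hFhi : ∀ m, F (m + n) ≤ u (m + n) := by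
    intro m
    have : trunc ω n (m + n) = false := by simp [trunc]
    rw [hF]; simp only [this]
    split <;> simp [u_nonneg]
  constructor
  · have : 0 ≤ π ω - π (trunc ω n) := by
      rw [hD2]; exact tsum_nonneg hFlo
    linarith
  · have : π ω - π (trunc ω n) ≤ P n := by
      rw [hD2, ← tsum_u_tail n]
      exact Summable.tsum_le_tsum hFhi hsFtail hsutail
    linarith

/-- extension of a finite word by `false`s -/
def ext (n : ℕ) (w : Fin n → Bool) : ℕ → Bool := fun k => if h : k < n then w ⟨k, h⟩ else false

lemma cover_le (n : ℕ) : coverNum E (P n) ≤ 2 ^ n := by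
  classical
  set s : Finset ℝ :=
    Finset.image (fun w : Fin n → Bool => π (ext n w) + P n / 2) Finset.univ with hs
  have hcard : s.card ≤ 2 ^ n := by
    calc s.card ≤ Finset.univ.card := Finset.card_image_le
      _ = 2 ^ n := by simp
  refine le_trans (coverNum_le_of_forall s ?_) hcard
  rintro x ⟨ω, rfl⟩
  refine ⟨π (ext n (fun k => ω k)) + P n / 2, ?_, ?_⟩
  · rw [hs]
    exact Finset.mem_image.mpr ⟨fun k => ω k, Finset.mem_univ _, rfl⟩
  · have hext : ext n (fun k : Fin n => ω k) = trunc ω n := by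
      funext k
      by_cases h : k < n <;> simp [ext, trunc, h]
    obtain ⟨h1, h2⟩ := trunc_bounds ω n
    rw [hext]
    have hπ : piSym cc ω = π ω := rfl
    rw [hπ, abs_le]
    constructor <;> linarith

lemma global_forall {δ : ℝ} (hδ : 0 < δ) :
    ∀ x ∈ E, ∃ y ∈ Finset.image (fun i : Fin (⌊1/δ⌋₊ + 1) => δ/2 + i * δ) Finset.univ,
      |x - y| ≤ δ / 2 := by
  intro x hx
  obtain ⟨hx0, hx1⟩ := E_subset hx
  have hfl : (⌊x/δ⌋₊ : ℝ) ≤ x/δ := Nat.floor_le (by positivity)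
  have hfl2 : x/δ < ⌊x/δ⌋₊ + 1 := Nat.lt_floor_add_one _
  have hle : ⌊x/δ⌋₊ ≤ ⌊1/δ⌋₊ := Nat.floor_le_floor (by gcongr)
  refine ⟨δ/2 + (⟨⌊x/δ⌋₊, by omega⟩ : Fin (⌊1/δ⌋₊ + 1)) * δ, ?_, ?_⟩
  · exact Finset.mem_image.mpr ⟨_, Finset.mem_univ _, rfl⟩
  · have h1 : (⌊x/δ⌋₊ : ℝ) * δ ≤ x := by
      have := (le_div_iff₀ hδ).mp (le_refl (x/δ))
      calc (⌊x/δ⌋₊ : ℝ) * δ ≤ (x/δ) * δ := by nlinarith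
        _ = x := by field_simp
    have h2 : x ≤ (⌊x/δ⌋₊ : ℝ) * δ + δ := by
      have := (div_lt_iff₀ hδ).mp hfl2
      nlinarith
    rw [abs_le]
    constructor <;> simp only [Fin.val_mk] <;> push_cast <;> nlinarith

lemma global_cover {δ : ℝ} (hδ : 0 < δ) : coverNum E δ ≤ ⌊1/δ⌋₊ + 1 := by
  refine le_trans (coverNum_le_of_forall _ (global_forall hδ)) ?_
  exact le_trans Finset.card_image_le (by simp)

lemma coverSet_nonempty {δ : ℝ} (hδ : 0 < δ) :
    {n : ℕ | ∃ c : Fin n → ℝ, E ⊆ ⋃ i, Metric.closedBall (c i) (δ / 2)}.Nonempty :=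
  ⟨_, mem_coverSet _ (global_forall hδ)⟩

lemma coverNum_mem {δ : ℝ} (hδ : 0 < δ) :
    coverNum E δ ∈ {n : ℕ | ∃ c : Fin n → ℝ, E ⊆ ⋃ i, Metric.closedBall (c i) (δ / 2)} :=
  Nat.sInf_mem (coverSet_nonempty hδ)

lemma coverNum_pos {δ : ℝ} (hδ : 0 < δ) : 1 ≤ coverNum E δ := by
  rcases Nat.eq_zero_or_pos (coverNum E δ) with h | h
  · exfalso
    have hmem := coverNum_mem hδ
    rw [h] at hmem
    obtain ⟨c', hc'⟩ := hmem
    obtain ⟨x, hx⟩ := E_nonempty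
    simpa using hc' hx
  · exact h


/-! ### separation and lower bound -/

lemma sep_words {n : ℕ} {w w' : Fin n → Bool} (hne : w ≠ w') :
    P n ≤ |π (ext n w) - π (ext n w')| := by
  have hωne : ext n w ≠ ext n w' := by
    intro h
    apply hne
    funext k
    have := congrFun h k.val
    simpa [ext, k.isLt] using this
  obtain ⟨k, hag, hk⟩ := first_diff hωne
  have hkn : k < n := by
    by_contra hkn
    push_neg at hkn
    apply hk
    simp [ext, Nat.not_lt.mpr hkn]
  have hPk : P n ≤ P k / 3 := by
    have h1 : P k ≥ P (n - 1) := P_anti (by omega)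
    have h2 : 3 * P n ≤ P (n - 1) := by
      have := P_succ_le (n - 1)
      rwa [Nat.sub_add_cancel (by omega)] at this
    linarith
  rcases Bool.dichotomy (ext n w k) with h1 | h1 <;> rcases Bool.dichotomy (ext n w' k) with h2 | h2
  · exact absurd (h1.trans h2.symm) hk
  · have h3 := (master _ _ k hag h1 h2).1
    have h4 := P_pos k
    rw [abs_sub_comm, abs_of_nonneg (by linarith)]
    linarith
  · have h3 := (master _ _ k (fun j hj => (hag j hj).symm) h2 h1).1
    have h4 := P_pos k
    rw [abs_of_nonneg (by linarith)]
    linarith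
  · exact absurd (h1.trans h2.symm) hk

lemma cover_ge (n : ℕ) (hn : 1 ≤ n) : 2 ^ n ≤ coverNum E (P n / 2) := by
  classical
  have hδ : 0 < P n / 2 := by have := P_pos n; linarith
  have hmem := coverNum_mem hδ
  set N := coverNum E (P n / 2) with hN
  obtain ⟨ctr, hcov⟩ := hmem
  have hpt : ∀ w : Fin n → Bool, ∃ i : Fin N, π (ext n w) ∈ Metric.closedBall (ctr i) (P n / 2 / 2) :=
    fun w => Set.mem_iUnion.mp (hcov (pi_mem (ext n w)))
  have hinj : Function.Injective (fun w : Fin n → Bool => (hpt w).choose) := by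
    intro w w' h
    by_contra hne
    have h1 := (hpt w).choose_spec
    have h2 := (hpt w').choose_spec
    have h' : (hpt w).choose = (hpt w').choose := h
    rw [h'] at h1
    have hd : dist (π (ext n w)) (π (ext n w')) ≤ P n / 2 := by
      calc dist (π (ext n w)) (π (ext n w'))
          ≤ dist (π (ext n w)) (ctr (hpt w').choose) + dist (ctr (hpt w').choose) (π (ext n w')) := dist_triangle _ _ _
        _ ≤ P n / 2 / 2 + P n / 2 / 2 := by
            refine add_le_add (Metric.mem_closedBall.mp h1) ?_
            rw [dist_comm]
            exact Metric.mem_closedBall.mp h2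
        _ = P n / 2 := by ring
    have hsep := sep_words hne
    rw [Real.dist_eq] at hd
    have := P_pos n
    linarith
  calc (2:ℕ) ^ n = Fintype.card (Fin n → Bool) := by simp
    _ ≤ Fintype.card (Fin N) := Fintype.card_le_of_injective _ hinj
    _ = N := by simp

/-! ### block sums -/

lemma cc_block {K j : ℕ} (h1 : 4 ^ K ≤ j) (h2 : j < 4 ^ (K + 1)) :
    cc j = if K % 2 = 1 then 1/4 else 1/3 := by
  have h : Nat.log 4 j = K := Nat.log_eq_of_pow_le_of_lt_pow h1 h2
  show (if Nat.log 4 j % 2 = 1 then (1:ℝ)/4 else 1/3) = _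
  rw [h]

lemma log_third : Real.log ((1:ℝ)/3) = -Real.log 3 := by
  rw [show (1:ℝ)/3 = 3⁻¹ from by norm_num, Real.log_inv]

lemma log_quarter : Real.log ((1:ℝ)/4) = -Real.log 4 := by
  rw [show (1:ℝ)/4 = 4⁻¹ from by norm_num, Real.log_inv]

lemma log34 : Real.log 3 ≤ Real.log 4 := Real.log_le_log (by norm_num) (by norm_num)

lemma neg_log_cc_le (j : ℕ) : -Real.log (cc j) ≤ Real.log 4 := by
  rcases cc_cases j with h | h <;> rw [h]
  · rw [log_third]; simpa using log34
  · rw [log_quarter]; simp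

lemma le_neg_log_cc (j : ℕ) : Real.log 3 ≤ -Real.log (cc j) := by
  rcases cc_cases j with h | h <;> rw [h]
  · rw [log_third]; simp
  · rw [log_quarter]; simpa using log34

lemma neg_log_P (n : ℕ) : -Real.log (P n) = ∑ j ∈ Finset.range n, -Real.log (cc j) := by
  rw [P, Real.log_prod (fun j _ => ne_of_gt (cc_pos j))]
  rw [← Finset.sum_neg_distrib]


lemma sum_block_lo {K : ℕ} (hodd : K % 2 = 1) :
    (4:ℝ)^K * (3 * Real.log 4 + Real.log 3) ≤ -Real.log (P (4 ^ (K+1))) := by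
  rw [neg_log_P]
  have hle : (4:ℕ)^K ≤ 4^(K+1) := Nat.pow_le_pow_right (by norm_num) (Nat.le_succ K)
  rw [Finset.range_eq_Ico, ← Finset.sum_Ico_consecutive _ (Nat.zero_le (4^K)) hle]
  have hS1 : (4:ℝ)^K * Real.log 3 ≤ ∑ j ∈ Finset.Ico 0 (4^K), -Real.log (cc j) := by
    calc (4:ℝ)^K * Real.log 3 = ∑ _j ∈ Finset.Ico 0 (4^K), Real.log 3 := by
          rw [Finset.sum_const, Nat.card_Ico, Nat.sub_zero, nsmul_eq_mul]; push_cast; ring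
      _ ≤ _ := Finset.sum_le_sum fun j _ => le_neg_log_cc j
  have hS2 : ∑ j ∈ Finset.Ico (4^K) (4^(K+1)), -Real.log (cc j)
      = 3 * (4:ℝ)^K * Real.log 4 := by
    have hconst : ∀ j ∈ Finset.Ico (4^K) (4^(K+1)), -Real.log (cc j) = Real.log 4 := by
      intro j hj
      obtain ⟨hj1, hj2⟩ := Finset.mem_Ico.mp hj
      rw [cc_block hj1 hj2, if_pos hodd, log_quarter]
      ring
    rw [Finset.sum_congr rfl hconst, Finset.sum_const, Nat.card_Ico, nsmul_eq_mul]
    have : ((4:ℕ)^(K+1) - 4^K : ℕ) = 3 * 4^K := by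
      have : (4:ℕ)^(K+1) = 4 * 4^K := by ring
      omega
    rw [this]
    push_cast
    ring
  linarith

lemma sum_block_hi {K : ℕ} (heven : K % 2 = 0) :
    -Real.log (P (4 ^ (K+1))) ≤ (4:ℝ)^K * (3 * Real.log 3 + Real.log 4) := by
  rw [neg_log_P]
  have hle : (4:ℕ)^K ≤ 4^(K+1) := Nat.pow_le_pow_right (by norm_num) (Nat.le_succ K)
  rw [Finset.range_eq_Ico, ← Finset.sum_Ico_consecutive _ (Nat.zero_le (4^K)) hle]
  have hS1 : ∑ j ∈ Finset.Ico 0 (4^K), -Real.log (cc j) ≤ (4:ℝ)^K * Real.log 4 := by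
    calc (∑ j ∈ Finset.Ico 0 (4^K), -Real.log (cc j))
        ≤ ∑ _j ∈ Finset.Ico 0 (4^K), Real.log 4 := Finset.sum_le_sum fun j _ => neg_log_cc_le j
      _ = (4:ℝ)^K * Real.log 4 := by
          rw [Finset.sum_const, Nat.card_Ico, Nat.sub_zero, nsmul_eq_mul]; push_cast; ring
  have hS2 : ∑ j ∈ Finset.Ico (4^K) (4^(K+1)), -Real.log (cc j)
      = 3 * (4:ℝ)^K * Real.log 3 := by
    have hconst : ∀ j ∈ Finset.Ico (4^K) (4^(K+1)), -Real.log (cc j) = Real.log 3 := by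
      intro j hj
      obtain ⟨hj1, hj2⟩ := Finset.mem_Ico.mp hj
      rw [cc_block hj1 hj2, if_neg (by omega), log_third]
      ring
    rw [Finset.sum_congr rfl hconst, Finset.sum_const, Nat.card_Ico, nsmul_eq_mul]
    have : ((4:ℕ)^(K+1) - 4^K : ℕ) = 3 * 4^K := by
      have : (4:ℕ)^(K+1) = 4 * 4^K := by ring
      omega
    rw [this]
    push_cast
    ring
  linarith

noncomputable def fval (δ : ℝ) : ℝ := Real.log (coverNum E δ) / (-Real.log δ)

lemma fval_eq (δ : ℝ) : Real.log (coverNum E δ) / (-Real.log δ) = fval δ := rfl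

lemma P_lt_one {n : ℕ} (hn : 1 ≤ n) : P n < 1 := by
  have h1 : P n ≤ P 1 := P_anti hn
  have h2 : P 1 = cc 0 := by simp [P]
  have := cc_le 0
  linarith

lemma logP_pos {n : ℕ} (hn : 1 ≤ n) : 0 < -Real.log (P n) := by
  have := Real.log_neg (P_pos n) (P_lt_one hn)
  linarith

lemma log4_eq : Real.log 4 = 2 * Real.log 2 := by
  rw [show (4:ℝ) = 2^2 by norm_num, Real.log_pow]
  push_cast; ring

lemma key82 : 82 * Real.log 2 ≤ 53 * Real.log 3 := by
  have h := Real.log_le_log (by positivity : (0:ℝ) < 2^82) (by norm_num : (2:ℝ)^82 ≤ 3^53)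
  rwa [Real.log_pow, Real.log_pow, Nat.cast_ofNat, Nat.cast_ofNat] at h

lemma key4486 : 2784 * Real.log 3 ≤ 4486 * Real.log 2 := by
  have h := Real.log_le_log (by positivity : (0:ℝ) < 3^2784) (by
    calc (3:ℝ)^2784 = ((3:ℝ)^96)^29 := by rw [← pow_mul]
      _ ≤ ((2:ℝ)^154)^29 := by gcongr; norm_num
      _ = 2^4466 := by rw [← pow_mul]
      _ ≤ 2^4486 := pow_le_pow_right₀ (by norm_num) (by norm_num) : (3:ℝ)^2784 ≤ 2^4486)
  rwa [Real.log_pow, Real.log_pow, Nat.cast_ofNat, Nat.cast_ofNat] at h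

lemma estU {K : ℕ} (hodd : K % 2 = 1) : fval (P (4 ^ (K+1))) ≤ 53/100 := by
  have hn1 : 1 ≤ 4^(K+1) := Nat.one_le_pow _ _ (by norm_num)
  have hD := logP_pos hn1
  have hT := sum_block_lo hodd
  have hNle : ((coverNum E (P (4^(K+1)))) : ℝ) ≤ 2^(4^(K+1)) := by
    have := cover_le (4^(K+1))
    calc ((coverNum E (P (4^(K+1)))) : ℝ) ≤ ((2^(4^(K+1)) : ℕ) : ℝ) := by exact_mod_cast this
      _ = 2^(4^(K+1)) := by push_cast; ring
  have hNpos : (0:ℝ) < (coverNum E (P (4^(K+1))) : ℝ) := by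
    exact_mod_cast coverNum_pos (P_pos _)
  have hlogN : Real.log (coverNum E (P (4^(K+1)))) ≤ (4^(K+1) : ℕ) * Real.log 2 := by
    calc Real.log (coverNum E (P (4^(K+1)))) ≤ Real.log (2^(4^(K+1)) : ℝ) :=
          Real.log_le_log hNpos hNle
      _ = (4^(K+1) : ℕ) * Real.log 2 := by rw [← Real.rpow_natCast]; rw [Real.log_rpow (by norm_num)]
  rw [fval, div_le_iff₀ hD]
  have hcast : ((4^(K+1) : ℕ) : ℝ) = 4 * 4^K := by push_cast; ring
  rw [hcast] at hlogN
  have hpow : (0:ℝ) < 4^K := by positivity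
  have hkey := key82
  have hlog4 := log4_eq
  have hlog2 : 0 < Real.log 2 := Real.log_pos (by norm_num)
  have hprod : 0 ≤ (4:ℝ)^K * (53 * Real.log 3 - 82 * Real.log 2) := by
    apply mul_nonneg hpow.le
    linarith
  nlinarith [hT, hlogN, hprod]

lemma estL {K : ℕ} (heven : K % 2 = 0) (hK : 2 ≤ K) : 58/100 ≤ fval (P (4 ^ (K+1)) / 2) := by
  have hn1 : 1 ≤ 4^(K+1) := Nat.one_le_pow _ _ (by norm_num)
  have hPpos := P_pos (4^(K+1))
  have hlogδ : Real.log (P (4^(K+1)) / 2) = Real.log (P (4^(K+1))) - Real.log 2 := by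
    rw [Real.log_div (ne_of_gt hPpos) (by norm_num)]
  have hlog2 : 0 < Real.log 2 := Real.log_pos (by norm_num)
  have hD : 0 < -Real.log (P (4^(K+1)) / 2) := by
    have := logP_pos hn1
    rw [hlogδ]; linarith
  have hT := sum_block_hi heven
  have hNge : (2:ℝ)^(4^(K+1)) ≤ (coverNum E (P (4^(K+1)) / 2) : ℝ) := by
    have := cover_ge (4^(K+1)) hn1
    calc (2:ℝ)^(4^(K+1)) = ((2^(4^(K+1)) : ℕ) : ℝ) := by push_cast; ring
      _ ≤ _ := by exact_mod_cast this
  have hlogN : ((4^(K+1) : ℕ) : ℝ) * Real.log 2 ≤ Real.log (coverNum E (P (4^(K+1)) / 2)) := by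
    calc ((4^(K+1) : ℕ) : ℝ) * Real.log 2 = Real.log ((2:ℝ)^(4^(K+1))) := by
          rw [← Real.rpow_natCast, Real.log_rpow (by norm_num)]
      _ ≤ _ := Real.log_le_log (by positivity) hNge
  rw [fval, le_div_iff₀ hD]
  have hcast : ((4^(K+1) : ℕ) : ℝ) = 4 * 4^K := by push_cast; ring
  rw [hcast] at hlogN
  have h16 : (16:ℝ) ≤ 4^K := by
    calc (16:ℝ) = 4^2 := by norm_num
      _ ≤ 4^K := pow_le_pow_right₀ (by norm_num) hK
  have hkey := key4486
  have hlog4 := log4_eq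
  have hnonneg : 0 ≤ 284 * Real.log 2 - 174 * Real.log 3 := by nlinarith
  have hprod : 16 * (284 * Real.log 2 - 174 * Real.log 3) ≤ 4^K * (284 * Real.log 2 - 174 * Real.log 3) :=
    mul_le_mul_of_nonneg_right h16 hnonneg
  rw [hlogδ]
  nlinarith [hT, hlogN]


lemma tendsto_pow4 (a b : ℕ) (ha : 1 ≤ a) : Tendsto (fun j : ℕ => 4^(a*j+b)) atTop atTop := by
  apply tendsto_atTop_mono (f := id) (fun j => ?_) tendsto_id
  calc (id j : ℕ) = j := rfl
    _ ≤ 4 ^ j := (Nat.lt_pow_self (n := j) (by norm_num)).le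
    _ ≤ 4 ^ (a*j+b) := Nat.pow_le_pow_right (by norm_num) (by nlinarith)

lemma freqU : ∃ᶠ δ in 𝓝[>](0:ℝ), fval δ ≤ 53/100 := by
  have ht : Tendsto (fun j : ℕ => P (4^((2*j+1)+1))) atTop (𝓝[>] (0:ℝ)) := by
    rw [tendsto_nhdsWithin_iff]
    constructor
    · exact P_tendsto.comp (by simpa [Nat.mul_comm] using tendsto_pow4 2 2 (by norm_num))
    · exact Eventually.of_forall fun j => P_pos _
  exact ht.frequently (Frequently.of_forall fun j => estU (by omega))

lemma freqL : ∃ᶠ δ in 𝓝[>](0:ℝ), 58/100 ≤ fval δ := by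
  have ht : Tendsto (fun j : ℕ => P (4^((2*j+2)+1)) / 2) atTop (𝓝[>] (0:ℝ)) := by
    rw [tendsto_nhdsWithin_iff]
    constructor
    · have h0 : Tendsto (fun j : ℕ => P (4^((2*j+2)+1))) atTop (𝓝 0) :=
        P_tendsto.comp (by simpa [Nat.mul_comm] using tendsto_pow4 2 3 (by norm_num))
      simpa using h0.div_const 2
    · exact Eventually.of_forall fun j => by
        have := P_pos (4^((2*j+2)+1)); exact div_pos this (by norm_num)
  exact ht.frequently (Frequently.of_forall fun j => estL (by omega) (by omega))

lemma hbddge : IsBoundedUnder (· ≥ ·) (𝓝[>](0:ℝ)) fval := by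
  apply isBoundedUnder_of_eventually_ge (a := (0:ℝ))
  filter_upwards [Ioo_mem_nhdsGT (one_pos : (0:ℝ) < 1)] with δ hδ
  obtain ⟨h0, h1⟩ := hδ
  apply div_nonneg
  · apply Real.log_nonneg
    exact_mod_cast coverNum_pos h0
  · have := Real.log_neg h0 h1
    linarith

lemma hbddle : IsBoundedUnder (· ≤ ·) (𝓝[>](0:ℝ)) fval := by
  apply isBoundedUnder_of_eventually_le (a := (2:ℝ))
  filter_upwards [Ioo_mem_nhdsGT (by norm_num : (0:ℝ) < 1/2)] with δ hδ
  obtain ⟨h0, h12⟩ := hδ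
  have hNpos : (0:ℝ) < (coverNum E δ : ℝ) := by exact_mod_cast coverNum_pos h0
  have hNle : (coverNum E δ : ℝ) ≤ 2/δ := by
    have h1 : (coverNum E δ : ℝ) ≤ (⌊1/δ⌋₊ : ℝ) + 1 := by
      have := global_cover h0
      exact_mod_cast this
    have h2 : (⌊1/δ⌋₊ : ℝ) ≤ 1/δ := Nat.floor_le (by positivity)
    have h3 : (1:ℝ) ≤ 1/δ := by
      rw [le_div_iff₀ h0]; linarith
    have : (1:ℝ)/δ + 1/δ = 2/δ := by ring
    linarith
  have hlogN : Real.log (coverNum E δ) ≤ Real.log 2 - Real.log δ := by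
    calc Real.log (coverNum E δ) ≤ Real.log (2/δ) := Real.log_le_log hNpos hNle
      _ = Real.log 2 - Real.log δ := Real.log_div (by norm_num) (ne_of_gt h0)
  have hlogδ : Real.log δ ≤ -Real.log 2 := by
    calc Real.log δ ≤ Real.log (1/2) := Real.log_le_log h0 h12.le
      _ = -Real.log 2 := by rw [show (1:ℝ)/2 = 2⁻¹ by norm_num, Real.log_inv]
  have hlog2 : 0 < Real.log 2 := Real.log_pos (by norm_num)
  have hD : 0 < -Real.log δ := by linarith
  rw [fval, div_le_iff₀ hD]
  linarith

lemma dim_lt : lowerBoxDim E < upperBoxDim E := by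
  have h1 : lowerBoxDim E ≤ 53/100 := liminf_le_of_frequently_le freqU hbddge
  have h2 : 58/100 ≤ upperBoxDim E := le_limsup_of_frequently_le freqL hbddle
  linarith


end S17

/-- There is a symmetric Cantor set `E_c` (with `c_n ∈ {1/3, 1/4}`) which is
the attractor of a bi-Lipschitz IFS `{φ₀, φ₁}` on `[0,1]` and whose box dimension does not
exist: the lower box dimension is strictly smaller than the upper box dimension. -/
theorem stmt17 :
    ∃ (c : ℕ → ℝ) (φ₀ φ₁ : ℝ → ℝ) (A B : ℝ),
      (∀ n, c n = 1 / 3 ∨ c n = 1 / 4) ∧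
      0 < A ∧ A ≤ B ∧ B < 1 ∧
      Set.MapsTo φ₀ (Set.Icc (0:ℝ) 1) (Set.Icc (0:ℝ) 1) ∧
      Set.MapsTo φ₁ (Set.Icc (0:ℝ) 1) (Set.Icc (0:ℝ) 1) ∧
      (∀ x ∈ Set.Icc (0:ℝ) 1, ∀ y ∈ Set.Icc (0:ℝ) 1,
        A * |x - y| ≤ |φ₀ x - φ₀ y| ∧ |φ₀ x - φ₀ y| ≤ B * |x - y|) ∧
      (∀ x ∈ Set.Icc (0:ℝ) 1, ∀ y ∈ Set.Icc (0:ℝ) 1,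
        A * |x - y| ≤ |φ₁ x - φ₁ y| ∧ |φ₁ x - φ₁ y| ≤ B * |x - y|) ∧
      (symCantor c).Nonempty ∧ IsCompact (symCantor c) ∧
      symCantor c = φ₀ '' symCantor c ∪ φ₁ '' symCantor c ∧
      lowerBoxDim (symCantor c) < upperBoxDim (symCantor c) := by
  refine ⟨S17.cc, S17.Φ false, S17.Φ true, 5/72, 19/36, S17.cc_cases, by norm_num, by norm_num,
    by norm_num, S17.Φ_mapsTo false, S17.Φ_mapsTo true,
    fun x hx y hy => S17.Φ_lip hx hy false,
    fun x hx y hy => S17.Φ_lip hx hy true,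
    S17.E_nonempty, S17.E_compact, S17.image_eq, S17.dim_lt⟩
end
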